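/- arXiv:1207.0597 — 5 statements merged into one kernel-verified Lean document; each statement's English description precedes it below -/
import Mathlib

section
/- Let d ≥ 2, L > 0, δ ∈ (0,1). Let x, y : [0,∞) → ℝ^d be Lipschitz curves with x(0), y(0) ∈ D₂ and 0 < x_d(0) ≤ y_d(0), |y'(t)| ≤ 1 for almost every t, x'(t) = χ^(d)(x(t), y(t)) for almost every t, and suppose y(t) ∈ cl(D₂) for all t ≥ 0. Then there exists a finite time t with |x_d(t) − y_d(t)| ≤ δ; letting u_d be the first such time, one has: (1) u_d ≤ L/δ; (2) |Π_{d−1}(x(u_d) − y(u_d))| ≤ |Π_{d−1}(x(0) − y(0))| + (L+1)δ; and (3) x_d(0) ≤ x_d(t) ≤ y_d(t) for all 0 ≤ t ≤ u_d. -/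
open Set MeasureTheory
open scoped ENNReal RealInnerProductSpace

noncomputable section

namespace PursuitRB

/-- Euclidean space `ℝ^d`. -/
abbrev E (d : ℕ) : Type := EuclideanSpace ℝ (Fin d)

variable {d : ℕ}

/-- The intrinsic distance in the closure of `D`: the infimum of lengths of continuous
rectifiable curves joining the two points inside `cl D`. -/
def intrinsicDist (D : Set (E d)) (v z : E d) : ℝ≥0∞ :=
  ⨅ (γ : ℝ → E d) (_ : ContinuousOn γ (Icc 0 1)) (_ : ∀ t ∈ Icc (0:ℝ) 1, γ t ∈ closure D)
    (_ : γ 0 = v) (_ : γ 1 = z), eVariationOn γ (Icc 0 1)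

/-- Intrinsic Hausdorff distance between two subsets of `cl D`. -/
def hausdorffI (D A B : Set (E d)) : ℝ≥0∞ :=
  max (⨆ v ∈ A, ⨅ z ∈ B, intrinsicDist D v z) (⨆ v ∈ B, ⨅ z ∈ A, intrinsicDist D v z)

/-- A domain: a nonempty open connected set. -/
def IsDomain (D : Set (E d)) : Prop := IsOpen D ∧ IsConnected D

/-- The set of exterior unit normals at a boundary point. -/
def extNormals (D : Set (E d)) (z : E d) (r : ℝ) : Set (E d) :=
  {ν | ‖ν‖ = 1 ∧ Metric.ball (z + r • ν) r ∩ D = ∅}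

/-- Uniform exterior sphere condition with radius `r`. -/
def UnifExtSphere (D : Set (E d)) (r : ℝ) : Prop :=
  ∀ z ∈ frontier D, (extNormals D z r).Nonempty ∧
    ∀ s : ℝ, 0 < s → s ≤ r → extNormals D z s = extNormals D z r

/-- Uniform interior cone condition with radius `δ₀` and angle `α`. -/
def UnifIntCone (D : Set (E d)) (δ₀ α : ℝ) : Prop :=
  ∀ v ∈ frontier D, ∃ m : E d, ‖m‖ = 1 ∧
    ∀ w ∈ D ∩ Metric.ball v δ₀, ∀ u : E d, ‖u‖ * Real.cos α < ⟪u, m⟫ →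
      w + u ∈ Metric.ball v δ₀ → w + u ∈ D

/-- ESIC domain: a bounded domain satisfying the uniform exterior sphere condition and the
uniform interior cone condition. -/
def IsESIC (D : Set (E d)) : Prop :=
  IsDomain D ∧ Bornology.IsBounded D ∧
    (∃ r > 0, UnifExtSphere D r) ∧
    (∃ δ₀ > 0, ∃ α : ℝ, 0 < α ∧ α ≤ Real.pi / 2 ∧ UnifIntCone D δ₀ α)

/-- A rectifiable loop in `cl D`, parametrized by arc length (periodically, with
period equal to its length). -/
structure Loop (D : Set (E d)) where
  toFun : ℝ → E d
  len : ℝ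
  len_nonneg : 0 ≤ len
  cont : Continuous toFun
  mem : ∀ t, toFun t ∈ closure D
  periodic : Function.Periodic toFun len
  unitSpeed : ∀ s ∈ Icc (0:ℝ) len, eVariationOn toFun (Icc 0 s) = ENNReal.ofReal s
  const_of_len_zero : len = 0 → ∀ s t, toFun s = toFun t

/-- The image of a loop. -/
def Loop.image {D : Set (E d)} (K : Loop D) : Set (E d) := K.toFun '' Icc 0 K.len

/-- The euclidean `ε`-neighbourhood of (the image of) a loop inside `cl D`. -/
def loopNbhd (D : Set (E d)) (K : Loop D) (ε : ℝ) : Set (E d) :=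
  {z ∈ closure D | Metric.infDist z K.image < ε}

/-- `f` and `g`, viewed as loops parametrized by the circle `ℝ / ℤ`, are homotopic through a
homotopy taking values in `S`. -/
def LoopHomotopyIn (S : Set (E d)) (f g : ℝ → E d) : Prop :=
  ∃ H : ℝ → ℝ → E d,
    ContinuousOn (fun p : ℝ × ℝ => H p.1 p.2) (univ ×ˢ Icc (0:ℝ) 1) ∧
    (∀ t γ, H (t + 1) γ = H t γ) ∧
    (∀ t : ℝ, ∀ γ ∈ Icc (0:ℝ) 1, H t γ ∈ S) ∧
    (∀ t, H t 0 = f t) ∧ (∀ t, H t 1 = g t)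

/-- Semi-stable rubber band. -/
def IsSemiStableRB (D : Set (E d)) (K : Loop D) : Prop :=
  ∃ ε > 0, ∀ K₁ : Loop D,
    LoopHomotopyIn (closure (loopNbhd D K ε)) (fun t => K.toFun (t * K.len))
      (fun t => K₁.toFun (t * K₁.len)) → K.len ≤ K₁.len

/-- Stable rubber band. -/
def IsStableRB (D : Set (E d)) (K : Loop D) : Prop :=
  IsSemiStableRB D K ∧
  ∃ ε > 0, ∀ η : ℝ, 0 < η → η ≤ ε → ∃ δ > 0, ∀ K₁ : Loop D,
    ENNReal.ofReal η ≤ hausdorffI D K.image K₁.image →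
    ∀ n : ℕ, 1 ≤ n →
      LoopHomotopyIn (closure (loopNbhd D K ε)) (fun t => K.toFun (t * (n * K.len)))
        (fun t => K₁.toFun (t * K₁.len)) →
      n * K.len + δ < K₁.len

/-- A length-monotonic homotopy contracting the loop `K` to a point of `cl D`. -/
structure Contraction (D : Set (E d)) (K : Loop D) where
  fam : ℝ → Loop D
  H : ℝ → ℝ → E d
  cont : ContinuousOn (fun p : ℝ × ℝ => H p.1 p.2) (univ ×ˢ Icc (0:ℝ) 1)
  periodic : ∀ t γ, H (t + 1) γ = H t γ
  compat : ∀ t : ℝ, ∀ γ ∈ Icc (0:ℝ) 1, H t γ = (fam γ).toFun (t * (fam γ).len)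
  init : fam 0 = K
  final : (fam 1).len = 0
  mono : AntitoneOn (fun γ => (fam γ).len) (Icc (0:ℝ) 1)

/-- `K` is well-contractible with contractibility constant `c`. -/
def WellContractible (D : Set (E d)) (K : Loop D) (c : ℝ) : Prop :=
  ∃ C : Contraction D K, ∀ γ η : ℝ, γ ∈ Icc (0:ℝ) 1 → η ∈ Icc (0:ℝ) 1 → γ < η →
    ENNReal.ofReal c * hausdorffI D (C.fam γ).image (C.fam η).image *
        ENNReal.ofReal (C.fam γ).len
      ≤ ENNReal.ofReal ((C.fam γ).len - (C.fam η).len)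

/-- A CL domain: a bounded ESIC domain all of whose loops are uniformly well-contractible. -/
def IsCLDomain (D : Set (E d)) : Prop :=
  IsESIC D ∧ ∃ c > 0, ∀ K : Loop D, WellContractible D K c

/-- An admissible curve in `cl D`: continuous and `1`-Lipschitz for the intrinsic distance. -/
def Admissible (D : Set (E d)) (x : ℝ → E d) : Prop :=
  ContinuousOn x (Ici 0) ∧ (∀ t : ℝ, 0 ≤ t → x t ∈ closure D) ∧
    ∀ s t : ℝ, 0 ≤ s → 0 ≤ t → intrinsicDist D (x s) (x t) ≤ ENNReal.ofReal |s - t|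

/-- The topology of uniform convergence on compacts on the path space. -/
def curveTop (d : ℕ) : TopologicalSpace (ℝ → E d) :=
  UniformOnFun.topologicalSpace ℝ (E d) {K : Set ℝ | IsCompact K}

/-- Borel measurability of a strategy with respect to the topology of uniform convergence
on compacts on the path space. -/
def StratMeasurable (d : ℕ) (F : ℝ → (ℝ → E d) → (ℝ → E d) → E d) : Prop :=
  letI : TopologicalSpace (ℝ → E d) := curveTop d
  letI : MeasurableSpace (ℝ → E d) := borel (ℝ → E d)
  Measurable fun p : ℝ × (ℝ → E d) × (ℝ → E d) => F p.1 p.2.1 p.2.2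

/-- A strategy is non-anticipative. -/
def NonAnticipative (d : ℕ) (F : ℝ → (ℝ → E d) → (ℝ → E d) → E d) : Prop :=
  ∀ t : ℝ, 0 ≤ t → ∀ x x' y y' : ℝ → E d,
    (∀ s, 0 ≤ s → s ≤ t → x s = x' s) → (∀ s, 0 ≤ s → s ≤ t → y s = y' s) →
    F t x y = F t x' y'

/-- The family `Λ` of quadruples `(x, y, Fx, Fy)`. -/
def InLambda (D : Set (E d)) (x y : ℝ → E d)
    (Fx Fy : ℝ → (ℝ → E d) → (ℝ → E d) → E d) : Prop :=
  Admissible D x ∧ Admissible D y ∧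
  StratMeasurable d Fx ∧ StratMeasurable d Fy ∧
  NonAnticipative d Fx ∧ NonAnticipative d Fy ∧
  (∀ t : ℝ, 0 ≤ t → ∀ v, HasDerivAt x v t → v = Fx t x y) ∧
  (∀ t : ℝ, 0 ≤ t → ∀ v, HasDerivAt y v t → v = Fy t x y)

/-- The family `Λ₀ ⊆ Λ`: the pursuer's strategy does not depend on the evader's path. -/
def InLambda0 (D : Set (E d)) (x y : ℝ → E d)
    (Fx Fy : ℝ → (ℝ → E d) → (ℝ → E d) → E d) : Prop :=
  InLambda D x y Fx Fy ∧ ∀ t : ℝ, 0 ≤ t → ∀ w u u' : ℝ → E d, Fx t w u = Fx t w u'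

/-- `inf_{t ≥ 0} dist_I(x(t), y(t))`. -/
def evasionInf (D : Set (E d)) (x y : ℝ → E d) : ℝ≥0∞ :=
  ⨅ t ∈ Ici (0:ℝ), intrinsicDist D (x t) (y t)

/-- The Man has a successful evasion strategy from `(x₀, y₀)`. -/
def SuccessfulEvasion (D : Set (E d)) (x₀ y₀ : E d) : Prop :=
  (∃ x y Fx Fy, x 0 = x₀ ∧ y 0 = y₀ ∧ InLambda D x y Fx Fy) ∧
  ∀ (x : ℝ → E d) (Fx : ℝ → (ℝ → E d) → (ℝ → E d) → E d), x 0 = x₀ →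
    (∃ y Fy, y 0 = y₀ ∧ InLambda D x y Fx Fy) →
    ∃ y Fy, y 0 = y₀ ∧ InLambda D x y Fx Fy ∧ 0 < evasionInf D x y

/-- A minimal geodesic in `cl D` from `v` to `z`, parametrized by arc length. -/
structure GeodesicIn (D : Set (E d)) (v z : E d) where
  toFun : ℝ → E d
  len : ℝ
  len_nonneg : 0 ≤ len
  contOn : ContinuousOn toFun (Icc 0 len)
  mem : ∀ t ∈ Icc (0:ℝ) len, toFun t ∈ closure D
  source : toFun 0 = v
  target : toFun len = z
  unitSpeed : ∀ s ∈ Icc (0:ℝ) len, eVariationOn toFun (Icc 0 s) = ENNReal.ofReal s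
  minimal : ENNReal.ofReal len = intrinsicDist D v z

abbrev E3 : Type := EuclideanSpace ℝ (Fin 3)

/-- Geodesic distance on the sphere of radius `1/√κ` in `ℝ³`. -/
def sphDistK (κ : ℝ) (u v : E3) : ℝ := (1 / Real.sqrt κ) * Real.arccos (κ * ⟪u, v⟫)

/-- Arc-length parametrization of the minimal great-circle arc from `u` to `v` on the sphere
of radius `1/√κ`. -/
def sphArcK (κ : ℝ) (u v : E3) (s : ℝ) : E3 :=
  if sphDistK κ u v = 0 then u
  else (Real.sin (Real.sqrt κ * (sphDistK κ u v - s)) /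
          Real.sin (Real.sqrt κ * sphDistK κ u v)) • u
     + (Real.sin (Real.sqrt κ * s) / Real.sin (Real.sqrt κ * sphDistK κ u v)) • v

/-- Comparison inequality for a pair of sides of a geodesic triangle against the corresponding
sides of a spherical comparison triangle. -/
def cmpPair (D : Set (E d)) {a b a' b' : E d} (γ : GeodesicIn D a b) (γ' : GeodesicIn D a' b')
    (κ : ℝ) (u v u' v' : E3) : Prop :=
  ∀ s ∈ Icc (0:ℝ) γ.len, ∀ t ∈ Icc (0:ℝ) γ'.len,
    intrinsicDist D (γ.toFun s) (γ'.toFun t) ≤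
      ENNReal.ofReal (sphDistK κ (sphArcK κ u v s) (sphArcK κ u' v' t))

/-- `cl D`, with the intrinsic distance, is a `CAT(κ)` space (`κ > 0`). -/
def IsCAT (κ : ℝ) (D : Set (E d)) : Prop :=
  (∀ v ∈ closure D, ∀ z ∈ closure D,
      intrinsicDist D v z < ENNReal.ofReal (Real.pi / Real.sqrt κ) →
      Nonempty (GeodesicIn D v z)) ∧
  (∀ p ∈ closure D, ∀ q ∈ closure D, ∀ r ∈ closure D,
    ∀ (γ₁ : GeodesicIn D p q) (γ₂ : GeodesicIn D q r) (γ₃ : GeodesicIn D r p),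
      γ₁.len + γ₂.len + γ₃.len < 2 * Real.pi / Real.sqrt κ →
      ∃ pt qt rt : E3, ‖pt‖ = 1 / Real.sqrt κ ∧ ‖qt‖ = 1 / Real.sqrt κ ∧
        ‖rt‖ = 1 / Real.sqrt κ ∧
        sphDistK κ pt qt = γ₁.len ∧ sphDistK κ qt rt = γ₂.len ∧ sphDistK κ rt pt = γ₃.len ∧
        cmpPair D γ₁ γ₁ κ pt qt pt qt ∧ cmpPair D γ₁ γ₂ κ pt qt qt rt ∧
        cmpPair D γ₁ γ₃ κ pt qt rt pt ∧ cmpPair D γ₂ γ₂ κ qt rt qt rt ∧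
        cmpPair D γ₂ γ₃ κ qt rt rt pt ∧ cmpPair D γ₃ γ₃ κ rt pt rt pt)

/-- There is a unique (minimal, arc-length parametrized) geodesic from `v` to `z` in `cl D`. -/
def UniqueGeodesic (D : Set (E d)) (v z : E d) : Prop :=
  ∃ γ : GeodesicIn D v z, ∀ γ' : GeodesicIn D v z, ∀ s ∈ Icc (0:ℝ) γ.len, γ'.toFun s = γ.toFun s

/-- `(x, y)` is a simple pursuit. -/
def SimplePursuit (D : Set (E d)) (x y : ℝ → E d) : Prop :=
  Admissible D x ∧ Admissible D y ∧
  (∀ t : ℝ, 0 ≤ t → x t ≠ y t → UniqueGeodesic D (x t) (y t)) ∧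
  (∀ᵐ t ∂(volume.restrict (Ici (0:ℝ))), x t ≠ y t →
      ∃ v, HasDerivAt x v t ∧ ‖v‖ = 1 ∧
        ∃ γ : GeodesicIn D (x t) (y t), HasDerivWithinAt γ.toFun v (Ici 0) 0) ∧
  (∀ t₀ : ℝ, 0 ≤ t₀ → x t₀ = y t₀ → ∀ t, t₀ ≤ t → x t = y t)

/-- `K` is a `k`-times broken geodesic loop. -/
def IsBrokenGeodesicLoop (D : Set (E d)) (K : Loop D) (k : ℕ) : Prop :=
  ∃ brk : Fin k → ℝ, StrictMono brk ∧ (∀ i, brk i ∈ Ico (0:ℝ) K.len) ∧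
    ∃ ρ > 0, ∀ a L : ℝ, 0 ≤ L → L ≤ K.len → L < ρ →
      (∀ i, ∀ m : ℤ, ¬ (a < brk i + m * K.len ∧ brk i + m * K.len < a + L)) →
      intrinsicDist D (K.toFun a) (K.toFun (a + L)) = ENNReal.ofReal L

/-- Orthogonal projection onto the first `j` coordinates of `ℝ^d`. -/
def proj (d j : ℕ) (w : E d) : E d :=
  (WithLp.equiv 2 (Fin d → ℝ)).symm fun k => if (k : ℕ) < j then w k else 0

/-- The pursuit vector field `χ^{(i)}` (where `i : Fin d` encodes the `1`-based coordinate
index `i+1`; `Π_{i-1}` is projection onto the first `i.val` coordinates, and the distinguished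
coordinate is `i` itself). -/
def chi (δ : ℝ) (i : Fin d) (x y : E d) : E d :=
  (WithLp.equiv 2 (Fin d → ℝ)).symm fun k =>
    if (k : ℕ) < (i : ℕ) then
      (min 1 (‖proj d (i : ℕ) (y - x)‖ / δ) * Real.sqrt (1 - δ ^ 2) /
          ‖proj d (i : ℕ) (y - x)‖) * (y k - x k)
    else if k = i then
      min 1 (|y i - x i| / δ) *
        Real.sqrt (1 - (min 1 (‖proj d (i : ℕ) (y - x)‖ / δ) * Real.sqrt (1 - δ ^ 2)) ^ 2) *
        Real.sign (y i - x i)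
    else 0

/-- The long open cuboid `D₂ = (-1/2,1/2)^{d-1} × (0,L)`. -/
def cuboid (d : ℕ) (L : ℝ) : Set (E d) :=
  {w | (∀ k : Fin d, (k : ℕ) < d - 1 → |w k| < 1/2) ∧
       ∀ k : Fin d, (k : ℕ) = d - 1 → 0 < w k ∧ w k < L}

/-- The closed cuboid `[-1/2,1/2]^{d-1} × [0,L]`, the closure of `D₂`. -/
def cuboidCl (d : ℕ) (L : ℝ) : Set (E d) :=
  {w | (∀ k : Fin d, (k : ℕ) < d - 1 → |w k| ≤ 1/2) ∧
       ∀ k : Fin d, (k : ℕ) = d - 1 → 0 ≤ w k ∧ w k ≤ L}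

/-!
While the gap `y_i - x_i` exceeds `δ`, the horizontal part `Π_{i-1} χ` of the pursuer's velocity
has length at most `√(1 - δ²)` and its `i`-th component is `√(1 - |Π_{i-1} χ|²) ≥ δ`, so `x_i`
climbs at rate at least `δ`; since `x_i ≤ y_i ≤ L`, the gap drops to `δ` before time `L / δ`.
While the horizontal distance `f = |Π_{i-1}(x - y)|` is at least `δ`, the pursuer moves
horizontally straight at the evader with speed `√(1 - δ²)` and the evader has speed at most `1`,
so `f' ≤ 1 - √(1 - δ²) ≤ δ²`. Starting from the last time `f ≤ max (f 0) δ`, this gives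
`f u ≤ f 0 + δ + δ² u ≤ f 0 + δ + δ L`. Both rate bounds are integrated with the fundamental
theorem of calculus for Lipschitz functions, which are absolutely continuous.
-/

theorem _root_.LipschitzOnWith.sub_le_mul_of_ae_hasDerivAt_le {h : ℝ → ℝ} {C : NNReal}
    {a b c : ℝ} (hab : a ≤ b) (hlip : LipschitzOnWith C h (Icc a b))
    (hd : ∀ᵐ t, t ∈ Ioo a b → ∃ v ≤ c, HasDerivAt h v t) :
    h b - h a ≤ c * (b - a) := by
  rw [← uIcc_of_le hab] at hlip
  have hac := hlip.absolutelyContinuousOnInterval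
  have hderiv : ∀ᵐ t ∂volume.restrict (Icc a b), deriv h t ≤ c := by
    rw [← Measure.restrict_congr_set Ioo_ae_eq_Icc, ae_restrict_iff' measurableSet_Ioo]
    filter_upwards [hd] with t ht hmem
    obtain ⟨v, hvc, hv⟩ := ht hmem
    exact hv.deriv ▸ hvc
  calc h b - h a = ∫ t in a..b, deriv h t := hac.integral_deriv_eq_sub.symm
    _ ≤ ∫ _ in a..b, c :=
      intervalIntegral.integral_mono_ae_restrict hab hac.intervalIntegrable_deriv
        intervalIntegrable_const hderiv
    _ = c * (b - a) := by simp [mul_comm]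

theorem _root_.LipschitzOnWith.mul_le_sub_of_ae_hasDerivAt_ge {h : ℝ → ℝ} {C : NNReal}
    {a b c : ℝ} (hab : a ≤ b) (hlip : LipschitzOnWith C h (Icc a b))
    (hd : ∀ᵐ t, t ∈ Ioo a b → ∃ v ≥ c, HasDerivAt h v t) :
    c * (b - a) ≤ h b - h a := by
  have := hlip.neg.sub_le_mul_of_ae_hasDerivAt_le hab (c := -c) <| by
    filter_upwards [hd] with t ht hmem
    obtain ⟨v, hvc, hv⟩ := ht hmem
    exact ⟨-v, neg_le_neg hvc, hv.neg⟩
  simp only [Pi.neg_apply] at this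
  linarith

theorem _root_.HasDerivAt.norm {F : Type*} [NormedAddCommGroup F] [InnerProductSpace ℝ F]
    {f : ℝ → F} {f' : F} {t : ℝ} (hf : HasDerivAt f f' t) (ht : f t ≠ 0) :
    HasDerivAt (‖f ·‖) (⟪f t, f'⟫ / ‖f t‖) t := by
  have hsq := hf.norm_sq.sqrt (by positivity)
  simp only [Real.sqrt_sq (norm_nonneg _)] at hsq
  convert hsq using 1
  field_simp

theorem exists_first_le_of_continuousOn {g : ℝ → ℝ} {δ : ℝ} (hg : ContinuousOn g (Ici 0))
    (hex : ∃ t ≥ 0, g t ≤ δ) :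
    ∃ u ≥ 0, g u ≤ δ ∧ (∀ s ∈ Ico 0 u, δ < g s) ∧
      ∀ t ∈ Icc 0 u, min (g 0) δ ≤ g t := by
  set S := Ici 0 ∩ g ⁻¹' Iic δ
  have hS : IsClosed S := hg.preimage_isClosed_of_isClosed isClosed_Ici isClosed_Iic
  have hSbdd : BddBelow S := ⟨0, fun t ht => ht.1⟩
  obtain ⟨hu0 : 0 ≤ sInf S, hgu : g (sInf S) ≤ δ⟩ := hS.csInf_mem hex hSbdd
  have hbefore : ∀ s ∈ Ico 0 (sInf S), δ < g s := fun s ⟨hs0, hsu⟩ =>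
    lt_of_not_ge fun hs => (csInf_le hSbdd ⟨hs0, hs⟩).not_gt hsu
  refine ⟨sInf S, hu0, hgu, hbefore, ?_⟩
  rcases hu0.eq_or_lt with hu | hu
  · intro t ht
    rw [← hu, Icc_self, mem_singleton_iff] at ht
    exact ht ▸ min_le_left _ _
  · intro t ht
    have hcl : ContinuousOn g (closure (Ico 0 (sInf S))) := by
      rw [closure_Ico hu.ne]; exact hg.mono Icc_subset_Ici_self
    have := le_on_closure (fun s hs => (hbefore s hs).le) continuousOn_const hcl
      (by rwa [closure_Ico hu.ne])
    exact (min_le_right _ _).trans this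

theorem le_max_add_mul_of_sub_le {f : ℝ → ℝ} {a b δ κ : ℝ} (hab : a ≤ b) (hκ : 0 ≤ κ)
    (hf : ContinuousOn f (Icc a b))
    (hgrowth : ∀ s ∈ Icc a b, (∀ r ∈ Ioo s b, δ ≤ f r) → f b - f s ≤ κ * (b - s)) :
    f b ≤ max (f a) δ + κ * (b - a) := by
  set S := Icc a b ∩ f ⁻¹' Iic (max (f a) δ)
  have hS : IsClosed S := hf.preimage_isClosed_of_isClosed isClosed_Icc isClosed_Iic
  have hSbdd : BddAbove S := ⟨b, fun t ht => ht.1.2⟩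
  have hSne : S.Nonempty := ⟨a, left_mem_Icc.2 hab, le_max_left (f a) δ⟩
  obtain ⟨hτ, hfτ : f (sSup S) ≤ max (f a) δ⟩ := hS.csSup_mem hSne hSbdd
  have hafter : ∀ r ∈ Ioo (sSup S) b, δ ≤ f r := fun r ⟨hτr, hrb⟩ =>
    (le_max_right (f a) δ).trans <| le_of_lt <| lt_of_not_ge fun hr =>
      (le_csSup hSbdd ⟨⟨hτ.1.trans hτr.le, hrb.le⟩, hr⟩).not_gt hτr
  have := hgrowth _ hτ hafter
  have : κ * (b - sSup S) ≤ κ * (b - a) := by gcongr; exact hτ.1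
  linarith

theorem proj_apply (d j : ℕ) (w : E d) (k : Fin d) :
    proj d j w k = if (k : ℕ) < j then w k else 0 := rfl

def projCLM (d j : ℕ) : E d →L[ℝ] E d :=
  LinearMap.toContinuousLinearMap
    { toFun := proj d j
      map_add' := fun v w => by ext k; simp only [proj_apply, PiLp.add_apply]; split <;> simp
      map_smul' := fun c v => by ext k; simp only [proj_apply, PiLp.smul_apply]; split <;> simp }

theorem proj_neg (d j : ℕ) (w : E d) : proj d j (-w) = -proj d j w := map_neg (projCLM d j) w

theorem proj_sub (d j : ℕ) (v w : E d) : proj d j (v - w) = proj d j v - proj d j w :=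
  map_sub (projCLM d j) v w

theorem norm_proj_le (d j : ℕ) (w : E d) : ‖proj d j w‖ ≤ ‖w‖ := by
  rw [EuclideanSpace.norm_eq, EuclideanSpace.norm_eq]
  gcongr with k
  rw [proj_apply]
  split <;> simp

theorem chi_apply (δ : ℝ) (i : Fin d) (x y : E d) (k : Fin d) :
    chi δ i x y k =
      if (k : ℕ) < (i : ℕ) then
        (min 1 (‖proj d i (y - x)‖ / δ) * √(1 - δ ^ 2) / ‖proj d i (y - x)‖) * (y k - x k)
      else if k = i then
        min 1 (|y i - x i| / δ) *
          √(1 - (min 1 (‖proj d i (y - x)‖ / δ) * √(1 - δ ^ 2)) ^ 2) * Real.sign (y i - x i)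
      else 0 := rfl

theorem chi_apply_self (δ : ℝ) (i : Fin d) (x y : E d) :
    chi δ i x y i = min 1 (|y i - x i| / δ) *
      √(1 - (min 1 (‖proj d i (y - x)‖ / δ) * √(1 - δ ^ 2)) ^ 2) * Real.sign (y i - x i) := by
  simp [chi_apply]

theorem le_chi_apply_self {δ : ℝ} (hδ0 : 0 < δ) (hδ1 : δ < 1) (i : Fin d) {x y : E d}
    (hgap : δ < y i - x i) : δ ≤ chi δ i x y i := by
  have hmin : min 1 (|y i - x i| / δ) = 1 :=
    min_eq_left <| by rw [abs_of_pos (hδ0.trans hgap), le_div_iff₀ hδ0]; linarith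
  set m := min 1 (‖proj d i (y - x)‖ / δ)
  have hm : m ^ 2 ≤ 1 := pow_le_one₀ (le_min zero_le_one (by positivity)) (min_le_left _ _)
  have hc : (m * √(1 - δ ^ 2)) ^ 2 ≤ 1 - δ ^ 2 := by
    rw [mul_pow, Real.sq_sqrt (by nlinarith)]
    exact mul_le_of_le_one_left (by nlinarith) hm
  rw [chi_apply_self, hmin, Real.sign_of_pos (hδ0.trans hgap), one_mul, mul_one,
    Real.le_sqrt' hδ0]
  linarith

theorem proj_chi (δ : ℝ) (i : Fin d) (x y : E d) :
    proj d i (chi δ i x y) =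
      (min 1 (‖proj d i (y - x)‖ / δ) * √(1 - δ ^ 2) / ‖proj d i (y - x)‖) •
        proj d i (y - x) := by
  ext k
  simp only [proj_apply, chi_apply, PiLp.smul_apply, smul_eq_mul, PiLp.sub_apply]
  split_ifs <;> simp

theorem inner_proj_chi {δ : ℝ} (hδ0 : 0 < δ) (i : Fin d) {x y : E d}
    (hf : δ ≤ ‖proj d i (x - y)‖) :
    ⟪proj d i (x - y), proj d i (chi δ i x y)⟫ = -(√(1 - δ ^ 2) * ‖proj d i (x - y)‖) := by
  have hyx : proj d i (y - x) = -proj d i (x - y) := by rw [← proj_neg, neg_sub]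
  have hmin : min 1 (‖proj d i (x - y)‖ / δ) = 1 :=
    min_eq_left <| by rwa [le_div_iff₀ hδ0, one_mul]
  have hpos : ‖proj d i (x - y)‖ ≠ 0 := (hδ0.trans_le hf).ne'
  rw [proj_chi, hyx, norm_neg, hmin, one_mul, real_inner_smul_right, inner_neg_right,
    real_inner_self_eq_norm_sq]
  field_simp

theorem one_sub_sqrt_one_sub_sq_le (δ : ℝ) : 1 - √(1 - δ ^ 2) ≤ δ ^ 2 := by
  rcases le_total (1 - δ ^ 2) 0 with h | h
  · rw [Real.sqrt_eq_zero'.2 h]; linarith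
  · have : 1 - δ ^ 2 ≤ √(1 - δ ^ 2) := (Real.le_sqrt h h).2 (by nlinarith)
    linarith

theorem inner_proj_sub_chi_le {δ : ℝ} (hδ0 : 0 < δ) (i : Fin d) {x y v : E d}
    (hv : ‖v‖ ≤ 1) (hf : δ ≤ ‖proj d i (x - y)‖) :
    ⟪proj d i (x - y), proj d i (chi δ i x y - v)⟫ ≤ δ ^ 2 * ‖proj d i (x - y)‖ := by
  have hv' : ⟪proj d i (x - y), proj d i v⟫ ≥ -‖proj d i (x - y)‖ := by
    have := neg_le_of_abs_le (abs_real_inner_le_norm (proj d i (x - y)) (proj d i v))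
    nlinarith [norm_proj_le d i v, norm_nonneg (proj d i (x - y))]
  rw [proj_sub d i (chi δ i x y) v, inner_sub_right, inner_proj_chi hδ0 i hf]
  nlinarith [one_sub_sqrt_one_sub_sq_le δ, norm_nonneg (proj d i (x - y))]

section Pursuit

variable {δ : ℝ} {i : Fin d} {x y : ℝ → E d} {Cx Cy : NNReal}

theorem coord_growth_ge_of_gap (hδ0 : 0 < δ) (hδ1 : δ < 1)
    (hx : LipschitzOnWith Cx x (Ici 0))
    (hx' : ∀ᵐ t, 0 ≤ t → HasDerivAt x (chi δ i (x t) (y t)) t)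
    {a b : ℝ} (ha : 0 ≤ a) (hab : a ≤ b) (hgap : ∀ s ∈ Ioo a b, δ < y s i - x s i) :
    δ * (b - a) ≤ x b i - x a i := by
  have hlip := (EuclideanSpace.proj (𝕜 := ℝ) i).lipschitz.comp_lipschitzOnWith
    (hx.mono (Icc_subset_Ici_iff hab |>.2 ha))
  refine hlip.mul_le_sub_of_ae_hasDerivAt_ge hab ?_
  filter_upwards [hx'] with t ht hmem
  exact ⟨_, le_chi_apply_self hδ0 hδ1 i (hgap t hmem),
    (EuclideanSpace.proj i).hasFDerivAt.comp_hasDerivAt t (ht (ha.trans hmem.1.le))⟩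

theorem norm_proj_sub_growth_le_of_le (hδ0 : 0 < δ)
    (hx : LipschitzOnWith Cx x (Ici 0)) (hy : LipschitzOnWith Cy y (Ici 0))
    (hx' : ∀ᵐ t, 0 ≤ t → HasDerivAt x (chi δ i (x t) (y t)) t)
    (hy' : ∀ᵐ t, 0 ≤ t → ∀ v, HasDerivAt y v t → ‖v‖ ≤ 1)
    {a b : ℝ} (ha : 0 ≤ a) (hab : a ≤ b)
    (hf : ∀ s ∈ Ioo a b, δ ≤ ‖proj d i (x s - y s)‖) :
    ‖proj d i (x b - y b)‖ - ‖proj d i (x a - y a)‖ ≤ δ ^ 2 * (b - a) := by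
  have hlip : LipschitzOnWith _ (fun t => ‖proj d i (x t - y t)‖) (Icc a b) :=
    lipschitzWith_one_norm.comp_lipschitzOnWith <| (projCLM d i).lipschitz.comp_lipschitzOnWith <|
      (hx.sub hy).mono (Icc_subset_Ici_iff hab |>.2 ha)
  refine hlip.sub_le_mul_of_ae_hasDerivAt_le hab ?_
  filter_upwards [hx', hy', hy.ae_differentiableWithinAt_of_mem] with t hxt hyt hyd hmem
  have ht : 0 < t := ha.trans_lt hmem.1
  have hyt' : HasDerivAt y (deriv y t) t :=
    ((hyd ht.le).differentiableAt (Ici_mem_nhds ht)).hasDerivAt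
  have hz : HasDerivAt (fun s => proj d i (x s - y s))
      (proj d i (chi δ i (x t) (y t) - deriv y t)) t :=
    (projCLM d i).hasFDerivAt.comp_hasDerivAt t ((hxt ht.le).sub hyt')
  have hpos : 0 < ‖proj d i (x t - y t)‖ := hδ0.trans_le (hf t hmem)
  refine ⟨_, ?_, hz.norm (norm_pos_iff.1 hpos)⟩
  rw [div_le_iff₀ hpos]
  exact inner_proj_sub_chi_le hδ0 i (hyt ht.le _ hyt') (hf t hmem)

theorem exists_first_time_coord_close (hδ0 : 0 < δ) (hδ1 : δ < 1) {L : ℝ}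
    (hx : LipschitzOnWith Cx x (Ici 0)) (hy : LipschitzOnWith Cy y (Ici 0))
    (hx0 : 0 < x 0 i) (hxy0 : x 0 i ≤ y 0 i)
    (hy' : ∀ᵐ t, 0 ≤ t → ∀ v, HasDerivAt y v t → ‖v‖ ≤ 1)
    (hx' : ∀ᵐ t, 0 ≤ t → HasDerivAt x (chi δ i (x t) (y t)) t)
    (hyL : ∀ t ≥ 0, y t i ≤ L) :
    ∃ u : ℝ, 0 ≤ u ∧ |x u i - y u i| ≤ δ ∧
      (∀ s : ℝ, 0 ≤ s → s < u → δ < |x s i - y s i|) ∧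
      u ≤ L / δ ∧
      ‖proj d i (x u - y u)‖ ≤ ‖proj d i (x 0 - y 0)‖ + (L + 1) * δ ∧
      ∀ t : ℝ, 0 ≤ t → t ≤ u → x 0 i ≤ x t i ∧ x t i ≤ y t i := by
  have hcoord {z : ℝ → E d} {C : NNReal} (hz : LipschitzOnWith C z (Ici 0)) :
      ContinuousOn (fun t => z t i) (Ici 0) :=
    (EuclideanSpace.proj (𝕜 := ℝ) i).continuous.comp_continuousOn hz.continuousOn
  have hgrowth {T : ℝ} (hT : 0 ≤ T) (hgap : ∀ s ∈ Ioo 0 T, δ < y s i - x s i) :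
      δ * T ≤ x T i - x 0 i := by
    simpa using coord_growth_ge_of_gap hδ0 hδ1 hx hx' le_rfl hT hgap
  have hbound {T : ℝ} (hT : 0 ≤ T) (hgap : ∀ s ∈ Ioo 0 T, δ < y s i - x s i)
      (hxyT : x T i ≤ y T i) : δ * T < L := by
    linarith [hgrowth hT hgap, hyL T hT]
  have hex : ∃ t ≥ 0, y t i - x t i ≤ δ := by
    by_contra! hfar
    have hLδ : 0 ≤ L / δ := div_nonneg (hx0.le.trans (hxy0.trans (hyL 0 le_rfl))) hδ0.le
    have := hbound hLδ (fun s hs => hfar s hs.1.le) (by linarith [hfar _ hLδ])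
    rw [mul_div_cancel₀ _ hδ0.ne'] at this
    exact this.false
  obtain ⟨u, hu0, hgu, hbefore, hafter⟩ :=
    exists_first_le_of_continuousOn (g := fun t => y t i - x t i) ((hcoord hy).sub (hcoord hx)) hex
  have hxy : ∀ t ∈ Icc 0 u, x t i ≤ y t i := fun t ht => by
    linarith [hafter t ht, le_min (sub_nonneg.2 hxy0) hδ0.le]
  have hδu : δ * u < L :=
    hbound hu0 (fun s hs => hbefore s ⟨hs.1.le, hs.2⟩) (hxy u ⟨hu0, le_rfl⟩)
  have hproj : ‖proj d i (x u - y u)‖ ≤ max ‖proj d i (x 0 - y 0)‖ δ + δ ^ 2 * (u - 0) :=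
    le_max_add_mul_of_sub_le hu0 (sq_nonneg δ)
      (((projCLM d i).continuous.comp_continuousOn
        (hx.continuousOn.sub hy.continuousOn)).norm.mono Icc_subset_Ici_self)
      fun s hs hf => norm_proj_sub_growth_le_of_le hδ0 hx hy hx' hy' hs.1 hs.2 hf
  refine ⟨u, hu0, ?_, ?_, ?_, ?_, ?_⟩
  · rwa [abs_sub_comm, abs_of_nonneg (sub_nonneg.2 (hxy u ⟨hu0, le_rfl⟩))]
  · intro s hs hsu
    rw [abs_sub_comm]
    exact (hbefore s ⟨hs, hsu⟩).trans_le (le_abs_self _)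
  · rw [le_div_iff₀ hδ0]
    linarith
  · nlinarith [max_le_add_of_nonneg (norm_nonneg (proj d i (x 0 - y 0))) hδ0.le]
  · intro t ht htu
    refine ⟨?_, hxy t ⟨ht, htu⟩⟩
    nlinarith [hgrowth ht fun s hs => hbefore s ⟨hs.1.le, hs.2.trans_le htu⟩]

end Pursuit

/-- the pursuit lemma for the last-coordinate field `χ^{(d)}` in the long
cuboid (the index `⟨d-1,_⟩ : Fin d` is the `d`-th coordinate). -/
theorem statement9 {d : ℕ} (hd : 2 ≤ d) (L δ : ℝ) (hδ0 : 0 < δ) (hδ1 : δ < 1)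
    (x y : ℝ → E d)
    (hxlip : ∃ C, LipschitzOnWith C x (Ici 0)) (hylip : ∃ C, LipschitzOnWith C y (Ici 0))
    (hx0d : 0 < x 0 ⟨d - 1, by omega⟩)
    (hxy0 : x 0 ⟨d - 1, by omega⟩ ≤ y 0 ⟨d - 1, by omega⟩)
    (hy' : ∀ᵐ t ∂(volume : Measure ℝ), 0 ≤ t → ∀ v, HasDerivAt y v t → ‖v‖ ≤ 1)
    (hx' : ∀ᵐ t ∂(volume : Measure ℝ), 0 ≤ t →
      HasDerivAt x (chi δ (⟨d - 1, by omega⟩ : Fin d) (x t) (y t)) t)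
    (hycl : ∀ t : ℝ, 0 ≤ t → y t ∈ cuboidCl d L) :
    ∃ u : ℝ, 0 ≤ u ∧ |x u ⟨d - 1, by omega⟩ - y u ⟨d - 1, by omega⟩| ≤ δ ∧
      (∀ s : ℝ, 0 ≤ s → s < u → δ < |x s ⟨d - 1, by omega⟩ - y s ⟨d - 1, by omega⟩|) ∧
      u ≤ L / δ ∧
      ‖proj d (d - 1) (x u - y u)‖ ≤ ‖proj d (d - 1) (x 0 - y 0)‖ + (L + 1) * δ ∧
      ∀ t : ℝ, 0 ≤ t → t ≤ u →
        x 0 ⟨d - 1, by omega⟩ ≤ x t ⟨d - 1, by omega⟩ ∧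
        x t ⟨d - 1, by omega⟩ ≤ y t ⟨d - 1, by omega⟩ := by
  obtain ⟨Cx, hx⟩ := hxlip
  obtain ⟨Cy, hy⟩ := hylip
  exact exists_first_time_coord_close hδ0 hδ1 hx hy hx0d hxy0 hy' hx'
    fun t ht => ((hycl t ht).2 ⟨d - 1, by omega⟩ rfl).2

end PursuitRB
end
end

section
/- Let D ⊆ ℝ^d be a bounded domain satisfying the uniform exterior sphere condition based on some radius r > 0 and the uniform interior cone condition based on some radius δ₀ > 0 and angle α ∈ (0, π/2]. Then the closure cl(D) has positive reach: there exists s > 0 such that for every z ∈ ℝ^d with dist(z, cl(D)) ≤ s there is a unique point v ∈ cl(D) with |z − v| = dist(z, cl(D)). -/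
open Set MeasureTheory
open scoped ENNReal RealInnerProductSpace

noncomputable section

namespace PursuitRB

variable {d : ℕ}

/-- Auxiliary: if `v` is a nearest point of `z` on `closure D`, distance `ρ` with
`0 < ρ ≤ r`, then for all `w ∈ closure D` we have `⟪w - v, z - v⟫ ≤ ρ * ‖w - v‖² / (2r)`. -/
lemma nearest_inner_bound {d : ℕ} (D : Set (E d)) (hopen : IsOpen D)
    (r : ℝ) (hr : 0 < r) (hext : UnifExtSphere D r)
    (z v : E d) (hv : v ∈ closure D)
    (hvd : dist z v = Metric.infDist z (closure D))
    (hρpos : 0 < Metric.infDist z (closure D))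
    (hρr : Metric.infDist z (closure D) ≤ r) :
    ∀ w ∈ closure D, ⟪w - v, z - v⟫ ≤
      Metric.infDist z (closure D) * (‖w - v‖ ^ 2 / (2 * r)) := by
  set ρ := Metric.infDist z (closure D) with hρ
  have hzv : ‖z - v‖ = ρ := by rw [← hvd]; exact (dist_eq_norm z v).symm
  set ν : E d := ρ⁻¹ • (z - v) with hν
  have hνnorm : ‖ν‖ = 1 := by
    rw [hν, norm_smul, hzv, Real.norm_eq_abs, abs_inv, abs_of_pos hρpos,
      inv_mul_cancel₀ hρpos.ne']
  have hzeq : v + ρ • ν = z := by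
    rw [hν, smul_inv_smul₀ hρpos.ne']; abel
  -- `v` lies in the frontier of `D`.
  have hvD : v ∉ D := by
    intro hvin
    obtain ⟨ε, hε, hball⟩ := Metric.isOpen_iff.1 hopen v hvin
    set t : ℝ := min (ε / 2) ρ with ht
    have htpos : 0 < t := lt_min (by linarith) hρpos
    have htρ : t ≤ ρ := min_le_right _ _
    have hp : v + t • ν ∈ D := by
      apply hball
      rw [Metric.mem_ball, dist_eq_norm]
      have h1 : v + t • ν - v = t • ν := by abel
      rw [h1, norm_smul, hνnorm, mul_one, Real.norm_eq_abs, abs_of_pos htpos]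
      exact lt_of_le_of_lt (min_le_left _ _) (by linarith)
    have hle : ρ ≤ dist z (v + t • ν) :=
      Metric.infDist_le_dist_of_mem (subset_closure hp)
    have hsub : z - (v + t • ν) = (ρ - t) • ν := by
      rw [← hzeq, sub_smul]; abel
    rw [dist_eq_norm, hsub, norm_smul, hνnorm, mul_one, Real.norm_eq_abs,
      abs_of_nonneg (by linarith)] at hle
    linarith
  have hfront : v ∈ frontier D := by
    rw [frontier, hopen.interior_eq]; exact ⟨hv, hvD⟩
  -- `ν` is an exterior normal at radius `ρ`, hence at radius `r`.
  have hνρ : ν ∈ extNormals D v ρ := by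
    refine ⟨hνnorm, ?_⟩
    rw [hzeq]
    rw [eq_empty_iff_forall_notMem]
    rintro p ⟨hp1, hp2⟩
    have h1 : ρ ≤ dist z p := Metric.infDist_le_dist_of_mem (subset_closure hp2)
    rw [Metric.mem_ball] at hp1
    rw [dist_comm] at h1
    linarith
  have hνr : ν ∈ extNormals D v r := by
    obtain ⟨-, heq⟩ := hext v hfront
    rw [← heq ρ hρpos hρr]; exact hνρ
  -- Every point of `closure D` avoids the ball `B(v + rν, r)`.
  intro w hw
  have hwball : w ∉ Metric.ball (v + r • ν) r := by
    intro hmem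
    obtain ⟨p, hp1, hp2⟩ := (_root_.mem_closure_iff.1 hw) _ Metric.isOpen_ball hmem
    have hE : Metric.ball (v + r • ν) r ∩ D = ∅ := hνr.2
    exact (eq_empty_iff_forall_notMem.1 hE) p ⟨hp1, hp2⟩
  have hdist : r ≤ ‖(w - v) - r • ν‖ := by
    have := Metric.mem_ball.not.1 hwball
    push_neg at this
    rw [dist_eq_norm] at this
    have h2 : w - (v + r • ν) = (w - v) - r • ν := by abel
    rwa [h2] at this
  have hsq : r ^ 2 ≤ ‖w - v‖ ^ 2 - 2 * (r * ⟪w - v, ν⟫) + r ^ 2 := by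
    have h1 : ‖(w - v) - r • ν‖ ^ 2 =
        ‖w - v‖ ^ 2 - 2 * ⟪w - v, r • ν⟫ + ‖r • ν‖ ^ 2 := by
      rw [← real_inner_self_eq_norm_sq, ← real_inner_self_eq_norm_sq,
        ← real_inner_self_eq_norm_sq]
      rw [inner_sub_sub_self, real_inner_comm (r • ν) (w - v)]
      ring
    have h2 : ‖r • ν‖ ^ 2 = r ^ 2 := by
      rw [norm_smul, hνnorm, mul_one, Real.norm_eq_abs, sq_abs]
    have h3 : r ^ 2 ≤ ‖(w - v) - r • ν‖ ^ 2 := by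
      have := pow_le_pow_left₀ hr.le hdist 2
      simpa using this
    rw [h1, h2, real_inner_smul_right] at h3
    linarith
  have hinner : ⟪w - v, ν⟫ = ρ⁻¹ * ⟪w - v, z - v⟫ := by
    rw [hν, real_inner_smul_right]
  rw [hinner] at hsq
  have hfin : ρ⁻¹ * ⟪w - v, z - v⟫ ≤ ‖w - v‖ ^ 2 / (2 * r) := by
    rw [le_div_iff₀ (by positivity : (0:ℝ) < 2 * r)]
    nlinarith
  have := mul_le_mul_of_nonneg_left hfin hρpos.le
  rw [← mul_assoc, mul_inv_cancel₀ hρpos.ne', one_mul] at this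
  exact this

/-- a bounded domain satisfying the uniform exterior sphere and uniform
interior cone conditions has closure of positive reach. -/
theorem statement10 {d : ℕ} (D : Set (E d)) (hdom : IsDomain D)
    (hbd : Bornology.IsBounded D)
    (r : ℝ) (hr : 0 < r) (hext : UnifExtSphere D r)
    (δ₀ α : ℝ) (hδ₀ : 0 < δ₀) (hα0 : 0 < α) (hα : α ≤ Real.pi / 2)
    (hcone : UnifIntCone D δ₀ α) :
    ∃ s > 0, ∀ z : E d, Metric.infDist z (closure D) ≤ s →
      ∃! v, v ∈ closure D ∧ dist z v = Metric.infDist z (closure D) := by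
  refine ⟨r / 2, by linarith, fun z hzs => ?_⟩
  have hclosed : IsClosed (closure D) := isClosed_closure
  have hne : (closure D).Nonempty := hdom.2.nonempty.closure
  by_cases hz : z ∈ closure D
  · refine ⟨z, ⟨hz, by rw [Metric.infDist_zero_of_mem hz, dist_self]⟩, ?_⟩
    rintro y ⟨-, hy⟩
    rw [Metric.infDist_zero_of_mem hz, dist_eq_zero] at hy
    exact hy.symm
  · have hcpt : IsCompact (closure D) :=
      Metric.isCompact_of_isClosed_isBounded hclosed hbd.closure
    obtain ⟨v, hvmem, hvd⟩ := hcpt.exists_infDist_eq_dist hne z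
    have hρpos : 0 < Metric.infDist z (closure D) :=
      hclosed.notMem_iff_infDist_pos hne |>.1 hz
    set ρ := Metric.infDist z (closure D) with hρ
    have hρr : ρ ≤ r := le_trans hzs (by linarith)
    refine ⟨v, ⟨hvmem, hvd.symm⟩, ?_⟩
    rintro w ⟨hwmem, hwd⟩
    have h1 := nearest_inner_bound D hdom.1 r hr hext z v hvmem hvd.symm hρpos hρr w hwmem
    have h2 := nearest_inner_bound D hdom.1 r hr hext z w hwmem hwd hρpos hρr v hvmem
    have hsum : ‖w - v‖ ^ 2 = ⟪w - v, z - v⟫ + ⟪v - w, z - w⟫ := by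
      have e1 : ⟪v - w, z - w⟫ = -⟪w - v, z - w⟫ := by
        rw [← neg_sub w v, inner_neg_left]
      rw [e1, ← sub_eq_add_neg, ← inner_sub_right]
      have e2 : z - v - (z - w) = w - v := by abel
      rw [e2, real_inner_self_eq_norm_sq]
    have hnorm : ‖v - w‖ = ‖w - v‖ := norm_sub_rev v w
    rw [hnorm] at h2
    rw [← hρ] at h1 h2
    have hkey : ‖w - v‖ ^ 2 ≤ ρ * (‖w - v‖ ^ 2 / r) := by
      have heq : ρ * (‖w - v‖ ^ 2 / (2 * r)) + ρ * (‖w - v‖ ^ 2 / (2 * r))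
          = ρ * (‖w - v‖ ^ 2 / r) := by field_simp; ring
      linarith [hsum, h1, h2]
    have hzero : ‖w - v‖ ^ 2 ≤ 0 := by
      have hρle : ρ ≤ r / 2 := hzs
      have hq : 0 ≤ ‖w - v‖ ^ 2 / r := by positivity
      have h5 : ρ * (‖w - v‖ ^ 2 / r) ≤ (r / 2) * (‖w - v‖ ^ 2 / r) :=
        mul_le_mul_of_nonneg_right hρle hq
      have h6 : (r / 2) * (‖w - v‖ ^ 2 / r) = ‖w - v‖ ^ 2 / 2 := by
        field_simp
      linarith
    have : ‖w - v‖ = 0 := by nlinarith [norm_nonneg (w - v)]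
    rw [norm_sub_eq_zero_iff] at this
    exact this

end PursuitRB
end
end

section
/- Let d ≥ 2 and let D ⊆ ℝ^d be a bounded ESIC domain that is star-shaped: there exists z₀ ∈ D such that for every z ∈ D the straight line segment from z₀ to z is contained in D. Then D is a CL domain. -/
open Set MeasureTheory
open scoped ENNReal RealInnerProductSpace

noncomputable section

namespace PursuitRB

variable {d : ℕ}

/-! ### Auxiliary material for Statement 11 -/

section Aux

/-- Variation scales when distances scale by a constant factor. -/
theorem eVariationOn_eq_mul {F G : Type*} [PseudoEMetricSpace F] [PseudoEMetricSpace G]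
    (f : ℝ → F) (g : ℝ → G) (c : ℝ≥0∞) (s : Set ℝ)
    (h : ∀ x ∈ s, ∀ y ∈ s, edist (f x) (f y) = c * edist (g x) (g y)) :
    eVariationOn f s = c * eVariationOn g s := by
  simp only [eVariationOn]
  rw [ENNReal.mul_iSup]
  refine iSup_congr fun p => ?_
  rw [Finset.mul_sum]
  exact Finset.sum_congr rfl fun i _ => h _ (p.2.2.2 _) _ (p.2.2.2 _)

theorem eVariationOn_id_Icc01_le : eVariationOn (id : ℝ → ℝ) (Icc (0:ℝ) 1) ≤ 1 := by
  have h := MonotoneOn.eVariationOn_le (f := (id : ℝ → ℝ)) (s := Icc (0:ℝ) 1)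
    monotoneOn_id (left_mem_Icc.2 zero_le_one) (right_mem_Icc.2 zero_le_one)
  simpa using h

theorem edist_affine_smul {d : ℕ} (z₀ : E d) {c : ℝ} (hc : 0 ≤ c) (u v : E d) :
    edist (z₀ + c • (u - z₀)) (z₀ + c • (v - z₀)) = ENNReal.ofReal c * edist u v := by
  rw [edist_dist, edist_dist, ← ENNReal.ofReal_mul hc]
  congr 1
  rw [dist_eq_norm, dist_eq_norm]
  have h : z₀ + c • (u - z₀) - (z₀ + c • (v - z₀)) = c • (u - v) := by module
  rw [h, norm_smul, Real.norm_eq_abs, abs_of_nonneg hc]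

/-- Intrinsic distance bound along a star ray. -/
theorem intrinsicDist_line_le {d : ℕ} (D : Set (E d)) (z₀ : E d)
    (hst : StarConvex ℝ z₀ (closure D)) {w : E d} (hw : w ∈ closure D)
    {a b : ℝ} (ha : a ∈ Icc (0:ℝ) 1) (hb : b ∈ Icc (0:ℝ) 1) :
    intrinsicDist D (z₀ + a • (w - z₀)) (z₀ + b • (w - z₀)) ≤
      ENNReal.ofReal (|b - a| * ‖w - z₀‖) := by
  set x : ℝ → E d := fun t => z₀ + (a + t * (b - a)) • (w - z₀) with hxdef
  have hx0 : x 0 = z₀ + a • (w - z₀) := by simp [hxdef]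
  have hx1 : x 1 = z₀ + b • (w - z₀) := by simp [hxdef]
  have hcont : ContinuousOn x (Icc 0 1) := by
    apply Continuous.continuousOn
    exact continuous_const.add
      (((continuous_const.add ((continuous_id.mul continuous_const))).smul continuous_const))
  have hmem : ∀ t ∈ Icc (0:ℝ) 1, x t ∈ closure D := by
    intro t ht
    have hc0 : 0 ≤ a + t * (b - a) := by nlinarith [ha.1, ha.2, hb.1, hb.2, ht.1, ht.2]
    have hc1 : a + t * (b - a) ≤ 1 := by nlinarith [ha.1, ha.2, hb.1, hb.2, ht.1, ht.2]
    have h := hst hw (by linarith : (0:ℝ) ≤ 1 - (a + t * (b - a))) hc0 (by ring)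
    have heq : (1 - (a + t * (b - a))) • z₀ + (a + t * (b - a)) • w = x t := by
      simp only [hxdef]; module
    rwa [heq] at h
  have hedist : ∀ s ∈ Icc (0:ℝ) 1, ∀ t ∈ Icc (0:ℝ) 1,
      edist (x s) (x t) = ENNReal.ofReal (|b - a| * ‖w - z₀‖) * edist (id s) (id t) := by
    intro s _ t _
    rw [edist_dist, edist_dist, ← ENNReal.ofReal_mul (by positivity)]
    congr 1
    rw [dist_eq_norm, dist_eq_norm]
    have h : x s - x t = ((s - t) * (b - a)) • (w - z₀) := by simp only [hxdef]; module
    rw [h, norm_smul, Real.norm_eq_abs, Real.norm_eq_abs, abs_mul]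
    simp only [id_eq]
    ring
  have hvar : eVariationOn x (Icc 0 1) ≤ ENNReal.ofReal (|b - a| * ‖w - z₀‖) := by
    rw [eVariationOn_eq_mul x id _ _ hedist]
    calc ENNReal.ofReal (|b - a| * ‖w - z₀‖) * eVariationOn (id : ℝ → ℝ) (Icc 0 1)
        ≤ ENNReal.ofReal (|b - a| * ‖w - z₀‖) * 1 :=
          mul_le_mul_right eVariationOn_id_Icc01_le _
      _ = _ := mul_one _
  calc intrinsicDist D (z₀ + a • (w - z₀)) (z₀ + b • (w - z₀)) ≤ eVariationOn x (Icc 0 1) :=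
        iInf_le_of_le x (iInf_le_of_le hcont (iInf_le_of_le hmem
          (iInf_le_of_le hx0 (iInf_le_of_le hx1 le_rfl))))
    _ ≤ _ := hvar

theorem hausdorffI_le {d : ℕ} {D A B : Set (E d)} {M : ℝ≥0∞}
    (h1 : ∀ v ∈ A, ∃ z ∈ B, intrinsicDist D v z ≤ M)
    (h2 : ∀ v ∈ B, ∃ z ∈ A, intrinsicDist D v z ≤ M) : hausdorffI D A B ≤ M := by
  refine max_le (iSup₂_le fun v hv => ?_) (iSup₂_le fun v hv => ?_)
  · obtain ⟨z, hz, hd⟩ := h1 v hv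
    exact le_trans (iInf₂_le z hz) hd
  · obtain ⟨z, hz, hd⟩ := h2 v hv
    exact le_trans (iInf₂_le z hz) hd

theorem image_div_const_Icc_zero {c L : ℝ} (hc : 0 < c) :
    (fun x : ℝ => x / c) '' Icc 0 (c * L) = Icc 0 L := by
  ext y
  simp only [mem_image, mem_Icc]
  constructor
  · rintro ⟨x, ⟨hx0, hxL⟩, rfl⟩
    exact ⟨div_nonneg hx0 hc.le, by rw [div_le_iff₀ hc]; linarith⟩
  · rintro ⟨hy0, hyL⟩
    exact ⟨c * y, ⟨by positivity, by nlinarith⟩, by field_simp⟩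

/-- The constant loop at a point of `cl D`. -/
def constLoop (D : Set (E d)) (z₀ : E d) (h : z₀ ∈ closure D) : Loop D where
  toFun _ := z₀
  len := 0
  len_nonneg := le_rfl
  cont := continuous_const
  mem _ := h
  periodic _ := rfl
  unitSpeed s hs := by
    have hs0 : s = 0 := le_antisymm hs.2 hs.1
    subst hs0
    rw [Icc_self, eVariationOn.subsingleton _ subsingleton_singleton]
    simp
  const_of_len_zero _ _ _ := rfl

/-- The loop `K` scaled by `c ∈ (0,1]` towards the star center `z₀`. -/
def scaledLoop (D : Set (E d)) (K : Loop D) (z₀ : E d) (hst : StarConvex ℝ z₀ (closure D))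
    (c : ℝ) (hc0 : 0 < c) (hc1 : c ≤ 1) : Loop D where
  toFun s := z₀ + c • (K.toFun (s / c) - z₀)
  len := c * K.len
  len_nonneg := mul_nonneg hc0.le K.len_nonneg
  cont := continuous_const.add
    (((K.cont.comp (continuous_id.div_const c)).sub continuous_const).const_smul c)
  mem t := by
    have hw := K.mem (t / c)
    have h := hst hw (by linarith : (0:ℝ) ≤ 1 - c) hc0.le (by ring)
    have heq : (1 - c) • z₀ + c • K.toFun (t / c) = z₀ + c • (K.toFun (t / c) - z₀) := by module
    rwa [heq] at h
  periodic s := by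
    have h : (s + c * K.len) / c = s / c + K.len := by
      rw [add_div, mul_div_cancel_left₀ _ hc0.ne']
    simp only [h, K.periodic (s / c)]
  unitSpeed s hs := by
    have hsc : s / c ∈ Icc (0:ℝ) K.len :=
      ⟨div_nonneg hs.1 hc0.le, by rw [div_le_iff₀ hc0]; linarith [hs.2]⟩
    have h1 : eVariationOn (fun s => z₀ + c • (K.toFun (s / c) - z₀)) (Icc 0 s)
        = ENNReal.ofReal c * eVariationOn (fun x => K.toFun (x / c)) (Icc 0 s) :=
      eVariationOn_eq_mul _ _ _ _ (fun u _ v _ => edist_affine_smul z₀ hc0.le _ _)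
    have hmono : MonotoneOn (fun x : ℝ => x / c) (Icc 0 s) :=
      fun u _ v _ huv => by
        show u / c ≤ v / c
        rw [div_eq_mul_inv, div_eq_mul_inv]
        exact mul_le_mul_of_nonneg_right huv (inv_nonneg.2 hc0.le)
    have himg : (fun x : ℝ => x / c) '' Icc 0 s = Icc 0 (s / c) := by
      have hcs : c * (s / c) = s := by field_simp
      conv_lhs => rw [← hcs]
      exact image_div_const_Icc_zero hc0
    calc eVariationOn (fun s => z₀ + c • (K.toFun (s / c) - z₀)) (Icc 0 s)
        = ENNReal.ofReal c * eVariationOn (K.toFun ∘ fun x : ℝ => x / c) (Icc 0 s) := h1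
      _ = ENNReal.ofReal c * eVariationOn K.toFun ((fun x : ℝ => x / c) '' Icc 0 s) := by
          rw [eVariationOn.comp_eq_of_monotoneOn _ _ hmono]
      _ = ENNReal.ofReal c * eVariationOn K.toFun (Icc 0 (s / c)) := by rw [himg]
      _ = ENNReal.ofReal c * ENNReal.ofReal (s / c) := by rw [K.unitSpeed _ hsc]
      _ = ENNReal.ofReal s := by
          rw [← ENNReal.ofReal_mul hc0.le]
          congr 1
          field_simp
  const_of_len_zero h s t := by
    have hK : K.len = 0 := by
      rcases mul_eq_zero.1 h with h' | h'
      · exact absurd h' hc0.ne'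
      · exact h'
    show z₀ + c • (K.toFun (s / c) - z₀) = z₀ + c • (K.toFun (t / c) - z₀)
    rw [K.const_of_len_zero hK (s / c) (t / c)]

/-- The contracting family of loops. -/
def famAux (D : Set (E d)) (K : Loop D) (z₀ : E d) (hst : StarConvex ℝ z₀ (closure D))
    (hz : z₀ ∈ closure D) (γ : ℝ) : Loop D :=
  if hγ0 : γ ≤ 0 then K
  else if h1 : γ < 1 then
    scaledLoop D K z₀ hst (1 - γ) (by linarith) (by linarith [lt_of_not_ge hγ0])
  else constLoop D z₀ hz

theorem famAux_len {D : Set (E d)} (K : Loop D) (z₀ : E d) (hst : StarConvex ℝ z₀ (closure D))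
    (hz : z₀ ∈ closure D) {γ : ℝ} (hγ : γ ∈ Icc (0:ℝ) 1) :
    (famAux D K z₀ hst hz γ).len = (1 - γ) * K.len := by
  unfold famAux
  split_ifs with h h1
  · have hγ0 : γ = 0 := le_antisymm h hγ.1
    subst hγ0; simp
  · rfl
  · have hγ1 : γ = 1 := le_antisymm hγ.2 (not_lt.1 h1)
    subst hγ1; simp [constLoop]

theorem famAux_H {D : Set (E d)} (K : Loop D) (z₀ : E d) (hst : StarConvex ℝ z₀ (closure D))
    (hz : z₀ ∈ closure D) {γ : ℝ} (hγ : γ ∈ Icc (0:ℝ) 1) (t : ℝ) :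
    (famAux D K z₀ hst hz γ).toFun (t * (famAux D K z₀ hst hz γ).len)
      = z₀ + (1 - γ) • (K.toFun (t * K.len) - z₀) := by
  unfold famAux
  split_ifs with h h1
  · have hγ0 : γ = 0 := le_antisymm h hγ.1
    subst hγ0; simp
  · show z₀ + (1 - γ) • (K.toFun (t * ((1 - γ) * K.len) / (1 - γ)) - z₀) = _
    have hne : (1:ℝ) - γ ≠ 0 := by intro hc; rw [sub_eq_zero] at hc; exact h1.ne hc.symm
    have harg : t * ((1 - γ) * K.len) / (1 - γ) = t * K.len := by field_simp
    rw [harg]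
  · have hγ1 : γ = 1 := le_antisymm hγ.2 (not_lt.1 h1)
    subst hγ1
    show z₀ = z₀ + (1 - 1 : ℝ) • (K.toFun (t * K.len) - z₀)
    simp

theorem famAux_image {D : Set (E d)} (K : Loop D) (z₀ : E d) (hst : StarConvex ℝ z₀ (closure D))
    (hz : z₀ ∈ closure D) {γ : ℝ} (hγ : γ ∈ Icc (0:ℝ) 1) :
    (famAux D K z₀ hst hz γ).image
      = (fun w => z₀ + (1 - γ) • (w - z₀)) '' K.image := by
  unfold famAux
  split_ifs with h h1
  · have hγ0 : γ = 0 := le_antisymm h hγ.1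
    subst hγ0
    have : (fun w : E d => z₀ + (1 - (0:ℝ)) • (w - z₀)) = id := by
      funext w; simp
    rw [this, image_id]
  · have hpos : (0:ℝ) < 1 - γ := by linarith [lt_of_not_ge h, h1]
    show (fun s => z₀ + (1 - γ) • (K.toFun (s / (1 - γ)) - z₀)) '' Icc 0 ((1 - γ) * K.len)
        = (fun w => z₀ + (1 - γ) • (w - z₀)) '' (K.toFun '' Icc 0 K.len)
    rw [show (fun s : ℝ => z₀ + (1 - γ) • (K.toFun (s / (1 - γ)) - z₀))
        = (fun w : E d => z₀ + (1 - γ) • (w - z₀)) ∘ K.toFun ∘ (fun s : ℝ => s / (1 - γ))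
        from rfl]
    rw [image_comp, image_comp, image_div_const_Icc_zero hpos]
  · have hγ1 : γ = 1 := le_antisymm hγ.2 (not_lt.1 h1)
    subst hγ1
    have hKne : K.image.Nonempty := ⟨K.toFun 0, 0, ⟨le_rfl, K.len_nonneg⟩, rfl⟩
    show (fun _ : ℝ => z₀) '' Icc (0:ℝ) 0 = _
    rw [Icc_self, image_singleton]
    have : (fun w : E d => z₀ + (1 - (1:ℝ)) • (w - z₀)) = fun _ => z₀ := by
      funext w; simp
    rw [this, hKne.image_const]

end Aux

/-- a bounded star-shaped ESIC domain is a CL domain. -/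
theorem statement11 {d : ℕ} (hd : 2 ≤ d) (D : Set (E d)) (hD : IsESIC D)
    (z₀ : E d) (hz₀ : z₀ ∈ D) (hstar : ∀ z ∈ D, segment ℝ z₀ z ⊆ D) :
    IsCLDomain D := by
  have hstD : StarConvex ℝ z₀ D := starConvex_iff_segment_subset.2 hstar
  have hstcl : StarConvex ℝ z₀ (closure D) := by
    intro y hy a b ha hb hab
    have hmap : Continuous fun w : E d => a • z₀ + b • w :=
      continuous_const.add (continuous_id.const_smul b)
    have h2 : (fun w : E d => a • z₀ + b • w) '' D ⊆ D := by
      rintro _ ⟨w, hw, rfl⟩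
      exact hstD hw ha hb hab
    exact closure_mono h2
      (image_closure_subset_closure_image hmap (mem_image_of_mem _ hy))
  have hz₀cl : z₀ ∈ closure D := subset_closure hz₀
  obtain ⟨R, hR⟩ := hD.2.1.closure.subset_closedBall z₀
  set R0 : ℝ := max R 1 with hR0def
  have hR0pos : (0:ℝ) < R0 := lt_of_lt_of_le one_pos (le_max_right _ _)
  have hRw : ∀ w ∈ closure D, ‖w - z₀‖ ≤ R0 := by
    intro w hw
    have h := hR hw
    rw [Metric.mem_closedBall] at h
    calc ‖w - z₀‖ = dist w z₀ := (dist_eq_norm w z₀).symm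
      _ ≤ R := h
      _ ≤ R0 := le_max_left _ _
  refine ⟨hD, 1 / R0, by positivity, fun K => ?_⟩
  have hKmem : ∀ w ∈ K.image, w ∈ closure D := by
    rintro _ ⟨t, _, rfl⟩
    exact K.mem t
  refine ⟨{ fam := famAux D K z₀ hstcl hz₀cl
            H := fun t γ => z₀ + (1 - γ) • (K.toFun (t * K.len) - z₀)
            cont := Continuous.continuousOn (continuous_const.add
              ((continuous_const.sub continuous_snd).smul
                ((K.cont.comp (continuous_fst.mul continuous_const)).sub continuous_const)))
            periodic := fun t γ => by
              show z₀ + (1 - γ) • (K.toFun ((t + 1) * K.len) - z₀)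
                = z₀ + (1 - γ) • (K.toFun (t * K.len) - z₀)
              rw [add_one_mul, K.periodic]
            compat := fun t γ hγ => (famAux_H K z₀ hstcl hz₀cl hγ t).symm
            init := by unfold famAux; rw [dif_pos le_rfl]
            final := by
              rw [famAux_len K z₀ hstcl hz₀cl (right_mem_Icc.2 zero_le_one)]; ring
            mono := fun γ hγ η hη hle => by
              show (famAux D K z₀ hstcl hz₀cl η).len ≤ (famAux D K z₀ hstcl hz₀cl γ).len
              rw [famAux_len K z₀ hstcl hz₀cl hγ, famAux_len K z₀ hstcl hz₀cl hη]
              exact mul_le_mul_of_nonneg_right (by linarith) K.len_nonneg },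
    fun γ η hγ hη hlt => ?_⟩
  show ENNReal.ofReal (1 / R0)
      * hausdorffI D (famAux D K z₀ hstcl hz₀cl γ).image (famAux D K z₀ hstcl hz₀cl η).image
      * ENNReal.ofReal (famAux D K z₀ hstcl hz₀cl γ).len
    ≤ ENNReal.ofReal ((famAux D K z₀ hstcl hz₀cl γ).len - (famAux D K z₀ hstcl hz₀cl η).len)
  have hηγ : (0:ℝ) ≤ η - γ := by linarith
  have hhaus : hausdorffI D (famAux D K z₀ hstcl hz₀cl γ).image
      (famAux D K z₀ hstcl hz₀cl η).image ≤ ENNReal.ofReal ((η - γ) * R0) := by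
    rw [famAux_image K z₀ hstcl hz₀cl hγ, famAux_image K z₀ hstcl hz₀cl hη]
    apply hausdorffI_le
    · rintro _ ⟨w, hw, rfl⟩
      refine ⟨z₀ + (1 - η) • (w - z₀), mem_image_of_mem _ hw, ?_⟩
      refine le_trans (intrinsicDist_line_le D z₀ hstcl (hKmem w hw)
        ⟨by linarith [hγ.2], by linarith [hγ.1]⟩
        ⟨by linarith [hη.2], by linarith [hη.1]⟩) ?_
      apply ENNReal.ofReal_le_ofReal
      rw [show (1 - η) - (1 - γ) = -(η - γ) by ring, abs_neg, abs_of_nonneg hηγ]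
      exact mul_le_mul_of_nonneg_left (hRw w (hKmem w hw)) hηγ
    · rintro _ ⟨w, hw, rfl⟩
      refine ⟨z₀ + (1 - γ) • (w - z₀), mem_image_of_mem _ hw, ?_⟩
      refine le_trans (intrinsicDist_line_le D z₀ hstcl (hKmem w hw)
        ⟨by linarith [hη.2], by linarith [hη.1]⟩
        ⟨by linarith [hγ.2], by linarith [hγ.1]⟩) ?_
      apply ENNReal.ofReal_le_ofReal
      rw [show (1 - γ) - (1 - η) = η - γ by ring, abs_of_nonneg hηγ]
      exact mul_le_mul_of_nonneg_left (hRw w (hKmem w hw)) hηγ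
  rw [famAux_len K z₀ hstcl hz₀cl hγ, famAux_len K z₀ hstcl hz₀cl hη]
  calc ENNReal.ofReal (1 / R0)
      * hausdorffI D (famAux D K z₀ hstcl hz₀cl γ).image (famAux D K z₀ hstcl hz₀cl η).image
      * ENNReal.ofReal ((1 - γ) * K.len)
      ≤ ENNReal.ofReal (1 / R0) * ENNReal.ofReal ((η - γ) * R0)
          * ENNReal.ofReal ((1 - γ) * K.len) :=
        mul_le_mul_left (mul_le_mul_right hhaus _) _
    _ = ENNReal.ofReal (1 / R0 * ((η - γ) * R0) * ((1 - γ) * K.len)) := by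
        rw [← ENNReal.ofReal_mul (by positivity),
          ← ENNReal.ofReal_mul (mul_nonneg (by positivity)
            (mul_nonneg hηγ hR0pos.le))]
    _ ≤ ENNReal.ofReal ((1 - γ) * K.len - (1 - η) * K.len) := by
        apply ENNReal.ofReal_le_ofReal
        have h1 : 1 / R0 * ((η - γ) * R0) = η - γ := by field_simp
        rw [h1]
        nlinarith [K.len_nonneg, mul_nonneg (mul_nonneg hηγ hγ.1) K.len_nonneg]

end PursuitRB
end
end

section
/- Let δ, ε ∈ ℝ satisfy 0 < 2ε < δ < π and ((1 − cos δ)/min{sin δ, sin(δ − 2ε)})·sin ε < 2. Then the equation cos(δ − η) − cos δ = (1 − cos δ)·sin²ε has a unique solution η in the interval [0, 2ε), and this solution satisfies η ≤ (1 − cos δ)·sin²ε / min{sin δ, sin(δ − 2ε)}. -/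
/-!
Put `c = (1 - cos δ) sin²ε` and `m = min (sin δ) (sin (δ - 2ε))`. Since `δ - η` ranges over
`(δ - 2ε, δ] ⊆ (0, π)`, where `cos` is injective, the solution is `η = δ - arccos (cos δ + c)`;
it lies in `[0, 2ε)` because `c < cos (δ - 2ε) - cos δ = 2 sin (δ - ε) sin ε`, which is the
smallness hypothesis combined with `m ≤ sin (δ - ε)`. By concavity `sin ≥ m` on `[δ - 2ε, δ]`, so
`c = ∫_{δ-η}^{δ} sin ≥ m η`.
-/

open Real Set

lemma min_sin_le_sin_of_mem_Icc {a b x : ℝ} (ha : 0 ≤ a) (hb : b ≤ π) (hx : x ∈ Icc a b) :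
    min (sin a) (sin b) ≤ sin x :=
  strictConcaveOn_sin_Icc.concaveOn.min_le_of_mem_Icc
    ⟨ha, (hx.1.trans hx.2).trans hb⟩ ⟨ha.trans (hx.1.trans hx.2), hb⟩ hx

lemma mul_sub_le_cos_sub_cos {a b m : ℝ} (hab : a ≤ b) (hm : ∀ x ∈ Icc a b, m ≤ sin x) :
    m * (b - a) ≤ cos a - cos b := by
  have := intervalIntegral.integral_mono_on (μ := MeasureTheory.volume) hab
    intervalIntegrable_const (continuous_sin.intervalIntegrable a b) hm
  rwa [integral_sin, intervalIntegral.integral_const, smul_eq_mul, mul_comm] at this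

lemma cos_sub_two_mul_sub_cos (δ ε : ℝ) :
    cos (δ - 2 * ε) - cos δ = 2 * sin (δ - ε) * sin ε := by
  rw [cos_sub_cos, show (δ - 2 * ε + δ) / 2 = δ - ε by ring,
    show (δ - 2 * ε - δ) / 2 = -ε by ring, sin_neg]
  ring

lemma arccos_mem_Ioc {a b y : ℝ} (ha : 0 ≤ a) (hab : a ≤ b) (hb : b ≤ π)
    (hby : cos b ≤ y) (hya : y < cos a) : arccos y ∈ Ioc a b := by
  constructor
  · calc a = arccos (cos a) := (arccos_cos ha (hab.trans hb)).symm
      _ < arccos y := arccos_lt_arccos ((neg_one_le_cos b).trans hby) hya (cos_le_one a)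
  · calc arccos y ≤ arccos (cos b) := arccos_le_arccos hby
      _ = b := arccos_cos (ha.trans hab) hb

/-- the equation `cos(δ - η) - cos δ = (1 - cos δ)·sin²ε` has a unique solution
`η ∈ [0, 2ε)`, and this solution is at most `(1 - cos δ)·sin²ε / min(sin δ, sin(δ - 2ε))`. -/
theorem statement13 (δ ε : ℝ) (hε : 0 < ε) (h2 : 2 * ε < δ) (hδ : δ < Real.pi)
    (hsmall : (1 - Real.cos δ) / min (Real.sin δ) (Real.sin (δ - 2 * ε)) * Real.sin ε < 2) :
    ∃ η : ℝ, η ∈ Set.Ico (0 : ℝ) (2 * ε) ∧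
      Real.cos (δ - η) - Real.cos δ = (1 - Real.cos δ) * Real.sin ε ^ 2 ∧
      η ≤ (1 - Real.cos δ) * Real.sin ε ^ 2 / min (Real.sin δ) (Real.sin (δ - 2 * ε)) ∧
      ∀ η' : ℝ, η' ∈ Set.Ico (0 : ℝ) (2 * ε) →
        Real.cos (δ - η') - Real.cos δ = (1 - Real.cos δ) * Real.sin ε ^ 2 → η' = η := by
  set m := min (sin δ) (sin (δ - 2 * ε))
  set c := (1 - cos δ) * sin ε ^ 2
  have hm : 0 < m := lt_min (sin_pos_of_pos_of_lt_pi (by linarith) hδ)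
    (sin_pos_of_pos_of_lt_pi (by linarith) (by linarith))
  have hm_le_sin : ∀ x ∈ Icc (δ - 2 * ε) δ, m ≤ sin x := fun x hx => by
    simpa only [m, min_comm] using min_sin_le_sin_of_mem_Icc (by linarith) hδ.le hx
  have hc : 0 ≤ c := mul_nonneg (by linarith [cos_le_one δ]) (sq_nonneg _)
  have hc_lt : c < cos (δ - 2 * ε) - cos δ := by
    have hsε : 0 < sin ε := sin_pos_of_pos_of_lt_pi hε (by linarith)
    have hsmall' : (1 - cos δ) * sin ε < 2 * m := by
      rwa [div_mul_eq_mul_div, div_lt_iff₀ hm] at hsmall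
    have hm_le := hm_le_sin (δ - ε) ⟨by linarith, by linarith⟩
    rw [cos_sub_two_mul_sub_cos]
    calc c = (1 - cos δ) * sin ε * sin ε := by ring
      _ < 2 * sin (δ - ε) * sin ε := mul_lt_mul_of_pos_right (by linarith) hsε
  set x := arccos (cos δ + c)
  obtain ⟨hx₁, hx₂⟩ : x ∈ Ioc (δ - 2 * ε) δ :=
    arccos_mem_Ioc (by linarith) (by linarith) hδ.le (by linarith) (by linarith)
  have hcos : cos x = cos δ + c :=
    cos_arccos (by linarith [neg_one_le_cos δ]) (by linarith [cos_le_one (δ - 2 * ε)])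
  refine ⟨δ - x, ⟨by linarith, by linarith⟩, by simp [hcos], ?_, ?_⟩
  · have hmx := mul_sub_le_cos_sub_cos hx₂ fun t ht => hm_le_sin t ⟨by linarith [ht.1], ht.2⟩
    rw [le_div_iff₀ hm]
    linarith
  · intro η' hη' heq
    have hx' : δ - η' = x := injOn_cos ⟨by linarith [hη'.2], by linarith [hη'.1]⟩
      ⟨by linarith, by linarith⟩ (by linarith)
    linarith
end

section
/- Let D = {x ∈ ℝ³ : x₃ > 0 and 1 < |x| < 2} (the open upper half of the spherical shell) and let K be the loop K(t) = (cos t, sin t, 0), 0 ≤ t < 2π, in cl(D). Then there exist constants c > 0 and ε₀ > 0 such that for every ε ∈ (0, ε₀] and every loop K' ∈ 𝒦 with d_H(K, K') ≤ ε, one has ℓ_{K'} ≥ 2π − c ε². -/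
open Set MeasureTheory
open scoped ENNReal RealInnerProductSpace

noncomputable section

namespace PursuitRB

variable {d : ℕ}

/-- The open upper half of the spherical shell in `ℝ³`. -/
def shell : Set (E 3) := {w : E 3 | 0 < w 2 ∧ 1 < ‖w‖ ∧ ‖w‖ < 2}

/-- The image of the loop `t ↦ (cos t, sin t, 0)`: the unit circle in the equatorial plane. -/
def equator : Set (E 3) := {w : E 3 | w 2 = 0 ∧ (w 0) ^ 2 + (w 1) ^ 2 = 1}

/-!
A Cauchy–Crofton argument. For every horizontal direction `θ`, the loop passes within `2ε` of
both `equatorPoint θ` and `-equatorPoint θ`; since it stays outside the unit ball, its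
projection on `equatorPoint θ` then rises to at least `1 - 8ε²` and falls to at most
`-(1 - 8ε²)`, so, the loop being closed, that projection has total variation at least
`4 (1 - 8ε²)`. Averaging over `θ` and using `∫₀^{2π} |⟪v, equatorPoint θ⟫| dθ ≤ 4 ‖v‖` gives
`4 ℓ ≥ 2π · 4 (1 - 8ε²)`. To exchange the average with the variation we work with a polygon
inscribed in the loop through finitely many sample points.
-/

open Real Finset intervalIntegral

theorem two_mul_dist_le_sum_dist_of_closed {α : Type*} [PseudoMetricSpace α] (p : ℕ → α)
    {n a b : ℕ} (hp : p n = p 0) (ha : a ≤ n) (hb : b ≤ n) :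
    2 * dist (p a) (p b) ≤ ∑ i ∈ range n, dist (p i) (p (i + 1)) := by
  wlog hab : a ≤ b generalizing a b
  · rw [dist_comm]; exact this hb ha (le_of_not_ge hab)
  have hsplit : ∑ i ∈ range n, dist (p i) (p (i + 1)) =
      (∑ i ∈ Ico 0 a, dist (p i) (p (i + 1))) + (∑ i ∈ Ico a b, dist (p i) (p (i + 1))) +
        ∑ i ∈ Ico b n, dist (p i) (p (i + 1)) := by
    rw [sum_Ico_consecutive _ (Nat.zero_le a) hab, sum_Ico_consecutive _ (Nat.zero_le b) hb,
      range_eq_Ico]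
  have hdirect := dist_le_Ico_sum_dist p hab
  have hround : dist (p a) (p b) ≤ dist (p 0) (p a) + dist (p b) (p n) := by
    rw [hp, dist_comm (p 0), dist_comm (p b)]; exact dist_triangle _ _ _
  linarith [dist_le_Ico_sum_dist p (Nat.zero_le a), dist_le_Ico_sum_dist p hb]

theorem one_sub_two_mul_sq_le_inner {F : Type*} [NormedAddCommGroup F] [InnerProductSpace ℝ F]
    {z e u : F} {r : ℝ} (hz : 1 ≤ ‖z‖) (he : ‖e‖ = 1) (hu : ‖u‖ = 1)
    (hze : ‖z - e‖ ≤ r) (hue : ‖u - e‖ ≤ r) : 1 - 2 * r ^ 2 ≤ ⟪z, u⟫ := by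
  have hdecomp : ⟪z, u⟫ = ⟪z, e⟫ + ⟪e, u - e⟫ + ⟪z - e, u - e⟫ := by
    simp only [inner_sub_left, inner_sub_right]; ring
  have hze_sq := norm_sub_sq_real z e
  have hue_sq := norm_sub_sq_real u e
  have hcs := neg_le_of_abs_le (abs_real_inner_le_norm (z - e) (u - e))
  have hr : 0 ≤ r := (norm_nonneg _).trans hze
  rw [hdecomp, inner_sub_right, real_inner_self_eq_norm_sq, ← real_inner_comm e u]
  rw [he, hu] at *
  nlinarith [mul_le_mul hze hue (norm_nonneg _) hr, pow_le_pow_left₀ (norm_nonneg _) hze 2,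
    pow_le_pow_left₀ (norm_nonneg _) hue 2]

theorem integral_abs_cos_zero_two_pi : ∫ θ in (0:ℝ)..2 * π, |cos θ| = 4 := by
  have hper : Function.Periodic (fun θ => |cos θ|) (2 * π) := fun θ => by simp
  have hsin : sin (3 * π / 2) = -1 := by
    rw [show 3 * π / 2 = π / 2 + π by ring, sin_add_pi, sin_pi_div_two]
  have hpos : ∫ θ in -(π / 2)..π / 2, |cos θ| = 2 := by
    rw [integral_congr fun θ hθ => abs_of_nonneg (cos_nonneg_of_mem_Icc ?_), integral_cos]
    · norm_num
    · rwa [Set.uIcc_of_le (by linarith [pi_pos])] at hθ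
  have hneg : ∫ θ in π / 2..3 * π / 2, |cos θ| = 2 := by
    rw [integral_congr fun θ hθ => abs_of_nonpos (cos_nonpos_of_pi_div_two_le_of_le ?_ ?_),
      intervalIntegral.integral_neg, integral_cos, hsin, sin_pi_div_two]
    · norm_num
    all_goals rw [Set.uIcc_of_le (by linarith [pi_pos])] at hθ; linarith [hθ.1, hθ.2]
  calc ∫ θ in (0:ℝ)..2 * π, |cos θ| = ∫ θ in -(π / 2)..-(π / 2) + 2 * π, |cos θ| := by
        simpa using hper.intervalIntegral_add_eq 0 (-(π / 2))
    _ = 4 := by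
      rw [← integral_add_adjacent_intervals (b := π / 2)
        (continuous_cos.abs.intervalIntegrable _ _) (continuous_cos.abs.intervalIntegrable _ _),
        hpos, show -(π / 2) + 2 * π = 3 * π / 2 by ring, hneg]
      norm_num

theorem integral_abs_mul_cos_add_mul_sin (a b : ℝ) :
    ∫ θ in (0:ℝ)..2 * π, |a * cos θ + b * sin θ| = 4 * √(a ^ 2 + b ^ 2) := by
  set z : ℂ := ⟨a, b⟩
  have hpolar : ∀ θ, a * cos θ + b * sin θ = ‖z‖ * cos (θ - z.arg) := fun θ => by
    have ha : ‖z‖ * cos z.arg = a := Complex.norm_mul_cos_arg z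
    have hb : ‖z‖ * sin z.arg = b := Complex.norm_mul_sin_arg z
    rw [cos_sub, ← ha, ← hb]
    ring
  have hper : Function.Periodic (fun θ => |cos θ|) (2 * π) := fun θ => by simp
  have hnorm : ‖z‖ = √(a ^ 2 + b ^ 2) := by
    rw [Complex.norm_def, Complex.normSq_mk]; ring_nf
  simp_rw [hpolar, abs_mul, abs_norm, intervalIntegral.integral_const_mul]
  rw [integral_comp_sub_right (fun θ => |cos θ|), zero_sub,
    show 2 * π - z.arg = -z.arg + 2 * π by ring, hper.intervalIntegral_add_eq (-z.arg) 0,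
    zero_add, integral_abs_cos_zero_two_pi, hnorm, mul_comm]

theorem Loop.exists_inscribed_polygon {d : ℕ} {D : Set (E d)} (K : Loop D) (T : Finset ℝ)
    (hT : ∀ t ∈ T, t ∈ Set.Icc 0 K.len) :
    ∃ (n : ℕ) (P : ℕ → E d), P n = P 0 ∧ (∀ t ∈ T, ∃ i ≤ n, P i = K.toFun t) ∧
      ∑ i ∈ range n, dist (P i) (P (i + 1)) ≤ K.len := by
  set T' := insert 0 (insert K.len T)
  obtain ⟨k, hcard⟩ : ∃ k, T'.card = k := ⟨_, rfl⟩
  have hk : 0 < k := hcard ▸ card_pos.2 (insert_nonempty _ _)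
  set f := T'.orderEmbOfFin hcard
  set u : ℕ → ℝ := fun i => f ⟨min i (k - 1), by omega⟩
  have hT' : ∀ t ∈ T', t ∈ Set.Icc 0 K.len := by
    intro t ht
    rcases mem_insert.1 ht with rfl | ht
    · exact ⟨le_rfl, K.len_nonneg⟩
    rcases mem_insert.1 ht with rfl | ht
    · exact ⟨K.len_nonneg, le_rfl⟩
    exact hT t ht
  have hu_mono : Monotone u := fun i j hij => f.monotone (Fin.mk_le_mk.2 (by omega))
  have hu_mem : ∀ i, u i ∈ Set.Icc 0 K.len := fun i => hT' _ (T'.orderEmbOfFin_mem hcard _)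
  have hu_zero : u 0 = 0 := by
    simp only [u, Nat.zero_min, f, orderEmbOfFin_zero hcard hk]
    exact le_antisymm (min'_le _ _ (mem_insert_self _ _))
      (le_min' _ _ _ fun t ht => (hT' t ht).1)
  have hu_last : u (k - 1) = K.len := by
    simp only [u, min_self, f, orderEmbOfFin_last hcard hk]
    exact le_antisymm (max'_le _ _ _ fun t ht => (hT' t ht).2)
      (le_max' _ _ (mem_insert_of_mem (mem_insert_self _ _)))
  refine ⟨k - 1, K.toFun ∘ u, ?_, fun t ht => ?_, ?_⟩
  · simp only [Function.comp, hu_zero, hu_last, ← K.periodic 0, zero_add]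
  · obtain ⟨⟨i, hi⟩, hit⟩ : t ∈ Set.range f := by
      rw [range_orderEmbOfFin]; exact mem_insert_of_mem (mem_insert_of_mem ht)
    exact ⟨i, by omega, by simp [u, hit.symm, Nat.min_eq_left (by omega : i ≤ k - 1)]⟩
  · have hvar := eVariationOn.sum_le (f := K.toFun) (n := k - 1) hu_mono hu_mem
    rw [K.unitSpeed K.len ⟨K.len_nonneg, le_rfl⟩] at hvar
    rw [← ENNReal.ofReal_le_ofReal_iff K.len_nonneg,
      ENNReal.ofReal_sum_of_nonneg fun i _ => dist_nonneg]
    simpa [edist_dist, dist_comm] using hvar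

theorem edist_le_intrinsicDist {d : ℕ} (D : Set (E d)) (v z : E d) :
    edist v z ≤ intrinsicDist D v z :=
  le_iInf fun γ => le_iInf fun _ => le_iInf fun _ => le_iInf fun h0 => le_iInf fun h1 =>
    h0 ▸ h1 ▸ eVariationOn.edist_le γ ⟨le_rfl, zero_le_one⟩ ⟨zero_le_one, le_rfl⟩

theorem exists_dist_lt_of_hausdorffI_lt {d : ℕ} {D A B : Set (E d)} {r : ℝ}
    (h : hausdorffI D A B < ENNReal.ofReal r) {e : E d} (he : e ∈ A) :
    ∃ z ∈ B, dist z e < r := by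
  have hinf : ⨅ z ∈ B, intrinsicDist D e z < ENNReal.ofReal r :=
    ((le_iSup₂ (f := fun v _ => ⨅ z ∈ B, intrinsicDist D v z) e he).trans
      (le_max_left _ _)).trans_lt h
  obtain ⟨z, hz, hlt⟩ := by simpa only [iInf_lt_iff] using hinf
  refine ⟨z, hz, ?_⟩
  rw [dist_comm, ← edist_lt_ofReal]
  exact (edist_le_intrinsicDist D e z).trans_lt hlt

def equatorPoint (θ : ℝ) : E 3 := !₂[cos θ, sin θ, 0]

theorem inner_equatorPoint (v : E 3) (θ : ℝ) :
    ⟪v, equatorPoint θ⟫ = v 0 * cos θ + v 1 * sin θ := by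
  simp [equatorPoint, PiLp.inner_apply, Fin.sum_univ_three, mul_comm]

theorem equatorPoint_add_pi (θ : ℝ) : equatorPoint (θ + π) = -equatorPoint θ := by
  ext i; fin_cases i <;> simp [equatorPoint, cos_add_pi, sin_add_pi]

theorem equatorPoint_mem_equator (θ : ℝ) : equatorPoint θ ∈ equator := by
  simp [equator, equatorPoint]

theorem norm_equatorPoint (θ : ℝ) : ‖equatorPoint θ‖ = 1 := by
  simp [equatorPoint, EuclideanSpace.norm_eq, Fin.sum_univ_three]

theorem norm_equatorPoint_sub_le (θ ψ : ℝ) :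
    ‖equatorPoint θ - equatorPoint ψ‖ ≤ |θ - ψ| := by
  have h := one_sub_sq_div_two_le_cos (x := θ - ψ)
  rw [← sqrt_sq_eq_abs, EuclideanSpace.norm_eq]
  refine sqrt_le_sqrt ?_
  simp [equatorPoint, Fin.sum_univ_three, cos_sub] at h ⊢
  nlinarith [sin_sq_add_cos_sq θ, sin_sq_add_cos_sq ψ]

theorem integral_abs_inner_equatorPoint_le (v : E 3) :
    ∫ θ in (0:ℝ)..2 * π, |⟪v, equatorPoint θ⟫| ≤ 4 * ‖v‖ := by
  simp_rw [inner_equatorPoint, integral_abs_mul_cos_add_mul_sin, EuclideanSpace.norm_eq,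
    Fin.sum_univ_three, Real.norm_eq_abs, sq_abs]
  exact mul_le_mul_of_nonneg_left (sqrt_le_sqrt (le_add_of_nonneg_right (sq_nonneg _)))
    (by norm_num)

theorem pi_mul_le_sum_dist_of_width (P : ℕ → E 3) {n : ℕ} (hP : P n = P 0) {w : ℝ}
    (hw : ∀ θ ∈ Set.Icc 0 (2 * π), ∃ a ≤ n, ∃ b ≤ n,
      w ≤ ⟪P a - P b, equatorPoint θ⟫) :
    π * w ≤ ∑ i ∈ range n, dist (P i) (P (i + 1)) := by
  set G : ℝ → ℝ := fun θ => ∑ i ∈ range n, |⟪P i - P (i + 1), equatorPoint θ⟫|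
  have hcont : ∀ v : E 3, Continuous fun θ => |⟪v, equatorPoint θ⟫| := fun v => by
    simp_rw [inner_equatorPoint]; fun_prop
  have hG : ∀ θ ∈ Set.Icc 0 (2 * π), 2 * w ≤ G θ := fun θ hθ => by
    obtain ⟨a, ha, b, hb, hab⟩ := hw θ hθ
    have := two_mul_dist_le_sum_dist_of_closed (fun i => ⟪P i, equatorPoint θ⟫)
      (congrArg (⟪·, equatorPoint θ⟫) hP) ha hb
    simp only [Real.dist_eq, ← inner_sub_left] at this
    linarith [le_abs_self ⟪P a - P b, equatorPoint θ⟫]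
  have hlower : ∫ _ in (0:ℝ)..2 * π, 2 * w ≤ ∫ θ in (0:ℝ)..2 * π, G θ :=
    intervalIntegral.integral_mono_on (by positivity)
      (intervalIntegrable_const (μ := MeasureTheory.volume))
      ((continuous_finsetSum _ fun i _ => hcont _).intervalIntegrable _ _) hG
  have hupper :
      ∫ θ in (0:ℝ)..2 * π, G θ ≤ 4 * ∑ i ∈ range n, dist (P i) (P (i + 1)) := by
    rw [intervalIntegral.integral_finsetSum fun i _ => (hcont _).intervalIntegrable _ _,
      mul_sum]
    exact sum_le_sum fun i _ => dist_eq_norm (P i) _ ▸ integral_abs_inner_equatorPoint_le _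
  rw [intervalIntegral.integral_const, smul_eq_mul] at hlower
  linarith

theorem one_le_norm_of_mem_closure_shell {z : E 3} (hz : z ∈ closure shell) : 1 ≤ ‖z‖ :=
  closure_minimal (fun _ hw => hw.2.1.le) (isClosed_le continuous_const continuous_norm) hz

theorem Loop.exists_polygon_of_hausdorffI_equator_le (K : Loop shell) {ε : ℝ} (hε : 0 < ε)
    (hK : hausdorffI shell equator K.image ≤ ENNReal.ofReal ε) :
    ∃ (n : ℕ) (P : ℕ → E 3), P n = P 0 ∧
      ∑ i ∈ range n, dist (P i) (P (i + 1)) ≤ K.len ∧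
      ∀ θ ∈ Set.Icc 0 (2 * π), ∃ a ≤ n, ∃ b ≤ n,
        2 * (1 - 8 * ε ^ 2) ≤ ⟪P a - P b, equatorPoint θ⟫ := by
  have hK' : hausdorffI shell equator K.image < ENNReal.ofReal (2 * ε) :=
    hK.trans_lt ((ENNReal.ofReal_lt_ofReal_iff (by positivity)).2 (by linarith))
  have hsample : ∀ j : ℕ, ∃ t ∈ Set.Icc 0 K.len,
      dist (K.toFun t) (equatorPoint (j * ε)) < 2 * ε := fun j => by
    obtain ⟨_, ⟨t, ht, rfl⟩, hdist⟩ :=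
      exists_dist_lt_of_hausdorffI_lt hK' (equatorPoint_mem_equator (j * ε))
    exact ⟨t, ht, hdist⟩
  choose t ht_mem ht_dist using hsample
  set M := ⌈3 * π / ε⌉₊
  obtain ⟨n, P, hclosed, hvisit, hlen⟩ := K.exists_inscribed_polygon ((range (M + 1)).image t)
    (by simpa using fun j _ => ht_mem j)
  -- the sampled directions `j * ε`, `j ≤ M`, reach every `θ ∈ [0, 3π]`, hence both `θ` and
  -- `θ + π` for `θ ∈ [0, 2π]`
  have hdir :
      ∀ θ ∈ Set.Icc 0 (3 * π), ∃ a ≤ n, 1 - 8 * ε ^ 2 ≤ ⟪P a, equatorPoint θ⟫ := by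
    rintro θ ⟨hθ0, hθ⟩
    set j := ⌊θ / ε⌋₊
    have hjM : j ≤ M := (Nat.floor_le_floor (div_le_div_of_nonneg_right hθ hε.le)).trans
      (Nat.floor_le_ceil _)
    have hjθ : j * ε ≤ θ := (le_div_iff₀ hε).1 (Nat.floor_le (by positivity))
    have hθj : θ < j * ε + ε := by
      have := Nat.lt_floor_add_one (θ / ε)
      rw [div_lt_iff₀ hε] at this; linarith
    obtain ⟨a, ha, hPa⟩ := hvisit (t j) (mem_image_of_mem t (mem_range.2 (by omega)))
    refine ⟨a, ha, ?_⟩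
    have := one_sub_two_mul_sq_le_inner (r := 2 * ε)
      (one_le_norm_of_mem_closure_shell (K.mem (t j))) (norm_equatorPoint (j * ε))
      (norm_equatorPoint θ) (by rw [← dist_eq_norm]; exact (ht_dist j).le)
      ((norm_equatorPoint_sub_le θ (j * ε)).trans (by rw [abs_of_nonneg (by linarith)]; linarith))
    rw [hPa]; linarith
  refine ⟨n, P, hclosed, hlen, fun θ ⟨hθ0, hθ⟩ => ?_⟩
  obtain ⟨a, ha, hPa⟩ := hdir θ ⟨hθ0, by linarith [pi_pos]⟩
  obtain ⟨b, hb, hPb⟩ := hdir (θ + π) ⟨by linarith [pi_pos], by linarith⟩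
  rw [equatorPoint_add_pi, inner_neg_right] at hPb
  exact ⟨a, ha, b, hb, by rw [inner_sub_left]; linarith⟩

/-- in the upper half-shell, any finite-length loop within intrinsic Hausdorff
distance `ε ≤ ε₀` of the equatorial unit circle `t ↦ (cos t, sin t, 0)` has length at least
`2π - c ε²`. -/
theorem statement17 :
    ∃ c > (0:ℝ), ∃ ε₀ > (0:ℝ), ∀ ε : ℝ, 0 < ε → ε ≤ ε₀ →
      ∀ K' : Loop shell, hausdorffI shell equator K'.image ≤ ENNReal.ofReal ε →
        2 * Real.pi - c * ε ^ 2 ≤ K'.len := by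
  refine ⟨16 * π, by positivity, 1, one_pos, fun ε hε _ K hK => ?_⟩
  obtain ⟨n, P, hclosed, hlen, hwidth⟩ := K.exists_polygon_of_hausdorffI_equator_le hε hK
  have hcrofton := pi_mul_le_sum_dist_of_width P hclosed hwidth
  linarith

end PursuitRB
end
end
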